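/- arXiv:1204.6152 — 9 statements merged into one kernel-verified Lean document; each statement's English description precedes it below -/
import Mathlib

section
/- Among all trees on n ≥ 2 vertices, the path P_n has strictly fewer subtrees than any other tree on n vertices. -/
/-!
In a tree, sending an unordered pair `{u, v}` to the vertex set of the `u`–`v` path (the metric
interval `I(u, v)`) is injective, and every such set is a subtree; the whole vertex set is one of
them only if the tree is a path. So a tree on `n` vertices that is not a path has more than
`(n + 1).choose 2` subtrees. In `P_n` every subtree is an integer interval, so `P_n` has at most
`(n + 1).choose 2` of them.
-/

open SimpleGraph

/-- The number of subtrees of a graph `G`: nonempty vertex subsets inducing a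
connected subgraph. -/
noncomputable def numSubtrees {V : Type*} [Fintype V] (G : SimpleGraph V) : ℕ :=
  {S : Set V | S.Nonempty ∧ (G.induce S).Connected}.ncard

namespace SimpleGraph

variable {V W : Type*} {G : SimpleGraph V} {u v x y : V}

/-- The metric interval `I(u, v)`: the vertices on some shortest walk from `u` to `v`. -/
def interval (G : SimpleGraph V) (u v : V) : Set V :=
  {x | G.dist u x + G.dist x v = G.dist u v}

lemma interval_comm (G : SimpleGraph V) (u v : V) : G.interval u v = G.interval v u := by
  ext x
  simp only [interval, Set.mem_ofPred_eq]
  rw [dist_comm (u := x), dist_comm (u := u) (v := x), dist_comm (u := u) (v := v), add_comm]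

lemma left_mem_interval (G : SimpleGraph V) (u v : V) : u ∈ G.interval u v := by
  simp [interval]

lemma IsAcyclic.length_eq_dist (hG : G.IsAcyclic) {p : G.Walk u v} (hp : p.IsPath) :
    p.length = G.dist u v := by
  obtain ⟨q, hq, hql⟩ := p.reachable.exists_path_of_dist
  rw [← hql, show p = q from congrArg Subtype.val ((hG.subsingleton_path u v).elim ⟨p, hp⟩ ⟨q, hq⟩)]

lemma IsTree.mem_interval_iff (hG : G.IsTree) {p : G.Walk u v} (hp : p.IsPath) :
    x ∈ G.interval u v ↔ x ∈ p.support := by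
  classical
  constructor
  · intro hx
    obtain ⟨q₁, -, hq₁⟩ := (hG.connected u x).exists_path_of_dist
    obtain ⟨q₂, -, hq₂⟩ := (hG.connected x v).exists_path_of_dist
    have hq : (q₁.append q₂).IsPath := by
      apply Walk.isPath_of_length_eq_dist
      rw [Walk.length_append, hq₁, hq₂]
      exact hx
    rw [show p = q₁.append q₂ from
      congrArg Subtype.val ((hG.isAcyclic.subsingleton_path u v).elim ⟨p, hp⟩ ⟨_, hq⟩)]
    exact Walk.mem_support_append_iff _ _ |>.mpr (Or.inl q₁.end_mem_support)
  · intro hx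
    have hlen := congrArg Walk.length (p.take_spec hx)
    rw [Walk.length_append] at hlen
    rw [interval, Set.mem_ofPred_eq, ← hG.isAcyclic.length_eq_dist (hp.takeUntil hx),
      ← hG.isAcyclic.length_eq_dist (hp.dropUntil hx), ← hG.isAcyclic.length_eq_dist hp, hlen]

lemma IsTree.connected_induce_interval (hG : G.IsTree) (u v : V) :
    (G.induce (G.interval u v)).Connected := by
  obtain ⟨p, hp⟩ := hG.connected.exists_isPath u v
  rw [show G.interval u v = {x | x ∈ p.support} from Set.ext fun _ => hG.mem_interval_iff hp]
  exact p.connected_induce_support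

lemma IsTree.mem_interval_or_mem_interval (hG : G.IsTree) (hx : x ∈ G.interval u v)
    (hy : y ∈ G.interval u v) : y ∈ G.interval u x ∨ y ∈ G.interval x v := by
  classical
  obtain ⟨p, hp⟩ := hG.connected.exists_isPath u v
  rw [hG.mem_interval_iff hp] at hx hy
  rw [hG.mem_interval_iff (hp.takeUntil hx), hG.mem_interval_iff (hp.dropUntil hx),
    ← Walk.mem_support_append_iff, p.take_spec hx]
  exact hy

lemma IsTree.dist_le_of_mem_interval (hG : G.IsTree) (hx : x ∈ G.interval u v)
    (hy : y ∈ G.interval u v) : G.dist x y ≤ G.dist u v := by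
  have := dist_comm (G := G) (u := x) (v := y)
  rcases hG.mem_interval_or_mem_interval hx hy with h | h <;>
    simp only [interval, Set.mem_ofPred_eq] at hx h <;> omega

lemma IsTree.sym2_eq_of_interval_eq (hG : G.IsTree) {u' v' : V}
    (h : G.interval u v = G.interval u' v') : s(u, v) = s(u', v') := by
  have hu' : u' ∈ G.interval u v := h ▸ G.left_mem_interval u' v'
  have hv' : v' ∈ G.interval u v := h ▸ G.interval_comm v' u' ▸ G.left_mem_interval v' u'
  have hu : u ∈ G.interval u' v' := h ▸ G.left_mem_interval u v
  have hv : v ∈ G.interval u' v' := h ▸ G.interval_comm v u ▸ G.left_mem_interval v u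
  have hdist := le_antisymm (hG.dist_le_of_mem_interval hu' hv') (hG.dist_le_of_mem_interval hu hv)
  -- `u'` and `v'` lie in order on `I(u, v)` at distance `d(u, v)`, so they are its endpoints.
  have := dist_comm (G := G) (u := u') (v := v')
  have := dist_comm (G := G) (u := v) (v := v')
  have := dist_comm (G := G) (u := v) (v := u')
  simp only [Sym2.eq_iff, ← hG.connected.dist_eq_zero_iff]
  rcases hG.mem_interval_or_mem_interval hu' hv' with h | h <;>
    simp only [interval, Set.mem_ofPred_eq] at hu' h <;> omega

lemma IsTree.nonempty_iso_of_bijective {H : SimpleGraph W} (hG : G.IsTree) (hH : H.Connected)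
    (f : H →g G) (hf : Function.Bijective f) : Nonempty (H ≃g G) := by
  let e := Equiv.ofBijective f hf
  have hle : H ≤ G.comap e := fun _ _ h => f.map_rel h
  have hcomap : (G.comap e).IsTree := (Iso.comap e G).isTree_iff.mpr hG
  rw [(isTree_iff_minimal_connected.mp hcomap).eq_of_le hH hle]
  exact ⟨Iso.comap e G⟩

lemma IsTree.nonempty_iso_pathGraph_of_interval_eq_univ [Fintype V] (hG : G.IsTree)
    (h : G.interval u v = Set.univ) : Nonempty (G ≃g pathGraph (Fintype.card V)) := by
  classical
  obtain ⟨p, hp⟩ := hG.connected.exists_isPath u v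
  have hsupp : p.support.toFinset = Finset.univ :=
    Finset.eq_univ_of_forall fun x => List.mem_toFinset.mpr <|
      (hG.mem_interval_iff hp).mp (h ▸ Set.mem_univ x)
  have hcard : p.length + 1 = Fintype.card V := by
    rw [← Finset.card_univ, ← hsupp, List.toFinset_card_of_nodup hp.support_nodup,
      Walk.length_support]
  have hbij : Function.Bijective hp.pathGraphCopy.toHom :=
    (Fintype.bijective_iff_injective_and_card _).mpr
      ⟨hp.pathGraphCopy.injective, by rw [Fintype.card_fin, hcard]⟩
  obtain ⟨e⟩ := hG.nonempty_iso_of_bijective (pathGraph_connected _) _ hbij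
  rw [← hcard]
  exact ⟨e.symm⟩

def sym2Interval (G : SimpleGraph V) : Sym2 V → Set V :=
  Sym2.lift ⟨G.interval, G.interval_comm⟩

lemma IsTree.sym2Interval_injective (hG : G.IsTree) : Function.Injective G.sym2Interval := by
  intro z z'
  induction z using Sym2.ind with | _ u v =>
  induction z' using Sym2.ind with | _ u' v' =>
  exact hG.sym2_eq_of_interval_eq

lemma IsTree.card_sym2_lt_numSubtrees [Fintype V] (hG : G.IsTree)
    (h : ¬ Nonempty (G ≃g pathGraph (Fintype.card V))) :
    Fintype.card (Sym2 V) < numSubtrees G := by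
  have : Nonempty V := hG.connected.nonempty
  have hsub : Set.range G.sym2Interval ⊂ {S : Set V | S.Nonempty ∧ (G.induce S).Connected} := by
    refine ⟨?_, fun hsub => ?_⟩
    · rintro _ ⟨z, rfl⟩
      induction z using Sym2.ind with | _ u v =>
      exact ⟨⟨u, G.left_mem_interval u v⟩, hG.connected_induce_interval u v⟩
    · obtain ⟨z, hz⟩ := hsub ⟨Set.univ_nonempty, (induceUnivIso G).connected_iff.mpr hG.connected⟩
      induction z using Sym2.ind with | _ u v =>
      exact h (hG.nonempty_iso_pathGraph_of_interval_eq_univ hz)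
  calc Fintype.card (Sym2 V) = (Set.range G.sym2Interval).ncard := by
        rw [Set.ncard_range_of_injective hG.sym2Interval_injective, Nat.card_eq_fintype_card]
    _ < numSubtrees G := Set.ncard_lt_ncard hsub

lemma pathGraph.mem_support_of_mem_uIcc {n : ℕ} {a b c : Fin n} (w : (pathGraph n).Walk a b)
    (hc : c ∈ Set.uIcc a b) : c ∈ w.support := by
  induction w with
  | nil => simp_all
  | @cons x y z hadj q ih =>
    rw [Walk.support_cons, List.mem_cons]
    by_cases hcx : c = x
    · exact .inl hcx
    · refine .inr (ih ?_)
      rw [Set.mem_uIcc, Fin.le_def, Fin.le_def, Fin.le_def, Fin.le_def] at hc ⊢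
      rw [pathGraph_adj] at hadj
      have := Fin.val_ne_of_ne hcx
      omega

lemma pathGraph.exists_eq_uIcc_of_connected {n : ℕ} {S : Set (Fin n)}
    (hS : ((pathGraph n).induce S).Connected) : ∃ a b, S = Set.uIcc a b := by
  have hne : S.Nonempty := Set.nonempty_coe_sort.mp hS.nonempty
  obtain ⟨a, ha, hmin⟩ := S.exists_min_image id S.toFinite hne
  obtain ⟨b, hb, hmax⟩ := S.exists_max_image id S.toFinite hne
  refine ⟨a, b, Set.Subset.antisymm (fun c hc => Set.mem_uIcc_of_le (hmin c hc) (hmax c hc))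
    fun c hc => ?_⟩
  obtain ⟨w⟩ := hS.preconnected ⟨a, ha⟩ ⟨b, hb⟩
  obtain ⟨c', -, rfl⟩ := List.mem_map.mp <| Walk.support_map _ w ▸
    pathGraph.mem_support_of_mem_uIcc (w.map (Embedding.induce S).toHom) hc
  exact c'.2

theorem numSubtrees_pathGraph_le (n : ℕ) :
    numSubtrees (pathGraph n) ≤ Fintype.card (Sym2 (Fin n)) := by
  let sym2UIcc : Sym2 (Fin n) → Set (Fin n) := Sym2.lift ⟨Set.uIcc, Set.uIcc_comm⟩
  calc numSubtrees (pathGraph n) ≤ (Set.range sym2UIcc).ncard := by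
        refine Set.ncard_le_ncard (fun S ⟨_, hS⟩ => ?_)
        obtain ⟨a, b, rfl⟩ := pathGraph.exists_eq_uIcc_of_connected hS
        exact ⟨s(a, b), rfl⟩
    _ ≤ Fintype.card (Sym2 (Fin n)) := by
        rw [← Set.image_univ, ← Nat.card_eq_fintype_card, ← Set.ncard_univ]
        exact Set.ncard_image_le (Set.toFinite _)

end SimpleGraph

theorem path_min_numSubtrees_general (n : ℕ)
    (V : Type*) [Fintype V] (G : SimpleGraph V) (hG : G.IsTree)
    (hcard : Fintype.card V = n)
    (hnotpath : ¬ Nonempty (G ≃g SimpleGraph.pathGraph n)) :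
    numSubtrees (SimpleGraph.pathGraph n) < numSubtrees G := by
  subst hcard
  calc numSubtrees (pathGraph (Fintype.card V))
      _ ≤ Fintype.card (Sym2 (Fin (Fintype.card V))) := numSubtrees_pathGraph_le _
      _ = Fintype.card (Sym2 V) := by simp only [Sym2.card, Fintype.card_fin]
      _ < numSubtrees G := hG.card_sym2_lt_numSubtrees hnotpath

theorem path_min_numSubtrees (n : ℕ) (hn : 2 ≤ n)
    (V : Type*) [Fintype V] (G : SimpleGraph V) (hG : G.IsTree)
    (hcard : Fintype.card V = n)
    (hnotpath : ¬ Nonempty (G ≃g SimpleGraph.pathGraph n)) :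
    numSubtrees (SimpleGraph.pathGraph n) < numSubtrees G :=
  path_min_numSubtrees_general n V G hG hcard hnotpath
end

section
/- The star K_{1,n-1} on n vertices has exactly 2^{n-1} + n - 1 subtrees, and every tree on n ≥ 2 vertices other than the star has strictly fewer subtrees. -/
open SimpleGraph

/-- The star `K_{1,n-1}` on `n` vertices: vertex `0` is adjacent to all others. -/
def starGraph (n : ℕ) : SimpleGraph (Fin n) :=
  SimpleGraph.fromRel (fun i _ => (i : ℕ) = 0)

/-!
The subtrees of the star centred at `r` are the `2 ^ (n - 1)` vertex sets containing `r` together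
with the `n - 1` other singletons.

In any graph a subtree with at least two vertices is the union of the edges it spans, so it is
determined by that nonempty edge set. A triangle-free graph without isolated vertices in which
every two edges meet is a star, so a tree that is not a star has two disjoint edges, and these two
alone span no subtree. Hence at most `2 ^ (n - 1) - 2` of the `2 ^ (n - 1)` edge sets of the tree
arise, and with the `n` singletons it has fewer than `2 ^ (n - 1) + n - 1` subtrees.
-/

theorem Set.ncard_setOf_mem {α : Type*} [Fintype α] (a : α) :
    {S : Set α | a ∈ S}.ncard = 2 ^ (Fintype.card α - 1) := by
  have hbij : Set.BijOn (fun S => S \ {a}) {S : Set α | a ∈ S} {S | a ∉ S} :=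
    Set.insert_erase_invOn.bijOn (fun S _ => by simp) (fun S _ => Set.mem_insert a S)
  have hcompl : {S : Set α | a ∉ S} = 𝒫 {a}ᶜ := by
    ext S
    simp [Set.subset_compl_singleton_iff]
  rw [hbij.ncard_eq, hcompl, Set.ncard_powerset, Set.ncard_compl, Set.ncard_singleton,
    Nat.card_eq_fintype_card]

namespace SimpleGraph

variable {V W : Type*} {G : SimpleGraph V}

lemma Reachable.mem_of_adj_closed {s : Set V} (hs : ∀ ⦃x y⦄, G.Adj x y → x ∈ s → y ∈ s)
    {u v : V} (h : G.Reachable u v) (hu : u ∈ s) : v ∈ s := by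
  obtain ⟨p⟩ := h
  by_contra hv
  obtain ⟨d, -, hd, hd'⟩ := p.exists_boundary_dart s hu hv
  exact hd' (hs d.adj hd)

lemma exists_adj_of_induce_connected {S : Set V} (hS : (G.induce S).Connected)
    (hnt : S.Nontrivial) {v : V} (hv : v ∈ S) : ∃ w ∈ S, G.Adj v w := by
  have : Nontrivial S := Set.nontrivial_coe_sort.2 hnt
  obtain ⟨w, hw⟩ := hS.preconnected.exists_adj_of_nontrivial ⟨v, hv⟩
  exact ⟨w, w.2, hw⟩

lemma injOn_edgeSet_inter_sym2 :
    Set.InjOn (fun S : Set V => G.edgeSet ∩ S.sym2)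
      {S | S.Nontrivial ∧ (G.induce S).Connected} := by
  have hcover : ∀ S ∈ {S : Set V | S.Nontrivial ∧ (G.induce S).Connected},
      S = {v | ∃ e ∈ G.edgeSet ∩ S.sym2, v ∈ e} := by
    rintro S ⟨hnt, hS⟩
    ext v
    refine ⟨fun hv => ?_, fun ⟨e, he, hv⟩ => Set.mem_sym2_iff_subset.1 he.2 hv⟩
    obtain ⟨w, hw, hvw⟩ := exists_adj_of_induce_connected hS hnt hv
    exact ⟨s(v, w), ⟨hvw, hv, hw⟩, Sym2.mem_mk_left v w⟩
  intro S hS T hT hST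
  rw [hcover S hS, hcover T hT]
  exact congrArg (fun E => {v | ∃ e ∈ E, v ∈ e}) hST

lemma edgeSet_inter_sym2_ne_pair {S : Set V} (hS : (G.induce S).Connected) {a b c d : V}
    (hac : a ≠ c) (had : a ≠ d) (hbc : b ≠ c) (hbd : b ≠ d) :
    G.edgeSet ∩ S.sym2 ≠ {s(a, b), s(c, d)} := by
  intro h
  have hab : s(a, b) ∈ G.edgeSet ∩ S.sym2 := h ▸ Or.inl rfl
  have hcd : s(c, d) ∈ G.edgeSet ∩ S.sym2 := h ▸ Or.inr rfl
  -- `{a, b}` is closed under adjacency inside `S`, yet `S` also contains `c`.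
  have hclosed : ∀ ⦃x y : S⦄, (G.induce S).Adj x y →
      x ∈ {z : S | z.1 = a ∨ z.1 = b} → y ∈ {z : S | z.1 = a ∨ z.1 = b} := by
    rintro ⟨x, hx⟩ ⟨y, hy⟩ hxy hxab
    have : s(x, y) ∈ ({s(a, b), s(c, d)} : Set (Sym2 V)) := h ▸ ⟨hxy, hx, hy⟩
    simp only [Set.mem_insert_iff, Set.mem_singleton_iff, Sym2.eq_iff, Set.mem_ofPred_eq]
      at this hxab ⊢
    grind
  have hcab := (hS.preconnected ⟨a, hab.2.1⟩ ⟨c, hcd.2.1⟩).mem_of_adj_closed hclosed (Or.inl rfl)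
  exact hcab.elim (fun h => hac h.symm) (fun h => hbc h.symm)

lemma ncard_nontrivial_induce_connected_add_two_le [Finite V] {a b c d : V} (hab : G.Adj a b)
    (hcd : G.Adj c d) (hac : a ≠ c) (had : a ≠ d) (hbc : b ≠ c) (hbd : b ≠ d) :
    {S : Set V | S.Nontrivial ∧ (G.induce S).Connected}.ncard + 2 ≤ 2 ^ G.edgeSet.ncard := by
  set T : Set (Set (Sym2 V)) := 𝒫 G.edgeSet \ {∅, {s(a, b), s(c, d)}}
  have hmaps : ∀ S ∈ {S : Set V | S.Nontrivial ∧ (G.induce S).Connected},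
      G.edgeSet ∩ S.sym2 ∈ T := by
    rintro S ⟨hnt, hS⟩
    obtain ⟨v, hv⟩ := hnt.nonempty
    obtain ⟨w, hw, hvw⟩ := exists_adj_of_induce_connected hS hnt hv
    have hne : G.edgeSet ∩ S.sym2 ≠ ∅ := Set.nonempty_iff_ne_empty.1 ⟨s(v, w), hvw, hv, hw⟩
    refine ⟨Set.inter_subset_left, ?_⟩
    rintro (h | h)
    exacts [hne h, edgeSet_inter_sym2_ne_pair hS hac had hbc hbd h]
  have hpair : ({∅, {s(a, b), s(c, d)}} : Set (Set (Sym2 V))) ⊆ 𝒫 G.edgeSet := by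
    rintro E (rfl | rfl)
    · exact Set.empty_subset _
    · rintro e (rfl | rfl)
      exacts [hab, hcd]
  have hT : T.ncard + 2 = 2 ^ G.edgeSet.ncard := by
    rw [← Set.ncard_powerset G.edgeSet, ← Set.ncard_sdiff_add_ncard_of_subset hpair,
      Set.ncard_pair (Set.insert_nonempty _ _).ne_empty.symm]
  have := Set.ncard_le_ncard_of_injOn _ hmaps injOn_edgeSet_inter_sym2 (Set.toFinite T)
  omega

lemma numSubtrees_le_card_add [Fintype V] (G : SimpleGraph V) :
    numSubtrees G ≤
      Fintype.card V + {S : Set V | S.Nontrivial ∧ (G.induce S).Connected}.ncard := by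
  have hsub : {S : Set V | S.Nonempty ∧ (G.induce S).Connected} ⊆
      Set.range (fun v : V => ({v} : Set V)) ∪ {S | S.Nontrivial ∧ (G.induce S).Connected} := by
    rintro S ⟨hne, hS⟩
    rcases hne.exists_eq_singleton_or_nontrivial with ⟨v, rfl⟩ | hnt
    exacts [Or.inl ⟨v, rfl⟩, Or.inr ⟨hnt, hS⟩]
  calc numSubtrees G ≤ _ := Set.ncard_le_ncard hsub (Set.toFinite _)
    _ ≤ _ := Set.ncard_union_le _ _
    _ = _ := by rw [Set.ncard_range_of_injective Set.singleton_injective, Nat.card_eq_fintype_card]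

lemma IsTree.numSubtrees_add_two_le [Fintype V] (hG : G.IsTree) {a b c d : V}
    (hab : G.Adj a b) (hcd : G.Adj c d) (hac : a ≠ c) (had : a ≠ d) (hbc : b ≠ c)
    (hbd : b ≠ d) : numSubtrees G + 2 ≤ Fintype.card V + 2 ^ (Fintype.card V - 1) := by
  classical
  have hedges : G.edgeSet.ncard = Fintype.card V - 1 := by
    rw [← coe_edgeFinset, Set.ncard_coe_finset, ← hG.card_edgeFinset, Nat.add_sub_cancel]
  have hnontrivial := ncard_nontrivial_induce_connected_add_two_le hab hcd hac had hbc hbd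
  rw [hedges] at hnontrivial
  have := numSubtrees_le_card_add G
  omega

lemma nonempty_and_induce_connected_starGraph_iff {r : V} {S : Set V} :
    S.Nonempty ∧ ((starGraph r).induce S).Connected ↔ r ∈ S ∨ ∃ v, S = {v} := by
  constructor
  · rintro ⟨hne, hS⟩
    rcases hne.exists_eq_singleton_or_nontrivial with hsingle | hnt
    · exact Or.inr hsingle
    obtain ⟨v, hv⟩ := hnt.nonempty
    obtain ⟨w, hw, hvw⟩ := exists_adj_of_induce_connected hS hnt hv
    rcases (starGraph_adj.1 hvw).2 with rfl | rfl
    exacts [Or.inl hv, Or.inl hw]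
  · rintro (hr | ⟨v, rfl⟩)
    · refine ⟨⟨r, hr⟩, (connected_iff_exists_forall_reachable _).2 ⟨⟨r, hr⟩, fun ⟨w, hw⟩ => ?_⟩⟩
      by_cases hrw : r = w
      · subst hrw
        rfl
      · exact Adj.reachable (starGraph_center_adj hrw)
    · have : Nonempty ({v} : Set V) := ⟨⟨v, rfl⟩⟩
      exact ⟨Set.singleton_nonempty v, by rw [induce_singleton_eq_top]; exact connected_top⟩

lemma numSubtrees_starGraph [Fintype V] (r : V) :
    numSubtrees (starGraph r) = 2 ^ (Fintype.card V - 1) + Fintype.card V - 1 := by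
  have hsets : {S : Set V | S.Nonempty ∧ ((starGraph r).induce S).Connected} =
      {S | r ∈ S} ∪ (fun v => ({v} : Set V)) '' {r}ᶜ := by
    ext S
    rw [Set.mem_ofPred_eq, nonempty_and_induce_connected_starGraph_iff]
    constructor
    · rintro (hr | ⟨v, rfl⟩)
      · exact Or.inl hr
      by_cases hv : v = r
      · exact Or.inl hv.symm
      · exact Or.inr ⟨v, hv, rfl⟩
    · rintro (hr | ⟨v, -, rfl⟩)
      exacts [Or.inl hr, Or.inr ⟨v, rfl⟩]
  have hdisj : Disjoint {S : Set V | r ∈ S} ((fun v => ({v} : Set V)) '' {r}ᶜ) := by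
    rw [Set.disjoint_left]
    rintro S hr ⟨v, hv, rfl⟩
    exact hv hr.symm
  have hpos := Fintype.card_pos_iff.2 ⟨r⟩
  rw [numSubtrees, hsets, Set.ncard_union_eq hdisj, Set.ncard_setOf_mem,
    Set.ncard_image_of_injective _ Set.singleton_injective, Set.ncard_compl, Set.ncard_singleton,
    Nat.card_eq_fintype_card, Nat.add_sub_assoc hpos]

lemma nonempty_starGraph_iso [Fintype V] [Fintype W] (h : Fintype.card V = Fintype.card W)
    (r : V) (r' : W) : Nonempty (starGraph r ≃g starGraph r') := by
  classical
  let e₀ := Fintype.equivOfCardEq h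
  let e := e₀.trans (Equiv.swap (e₀ r) r')
  have he : e r = r' := Equiv.swap_apply_left _ _
  exact ⟨⟨e, by simp [← he, e.injective.eq_iff]⟩⟩

lemma eq_starGraph_of_forall_adj_eq (hG : ∀ v, ∃ w, G.Adj v w) {r : V}
    (hr : ∀ x y, G.Adj x y → x = r ∨ y = r) : G = starGraph r := by
  have hcentre : ∀ v, r ≠ v → G.Adj r v := by
    intro v hrv
    obtain ⟨w, hvw⟩ := hG v
    rcases hr v w hvw with rfl | rfl
    exacts [(hrv rfl).elim, hvw.symm]
  ext x y
  rw [starGraph_adj]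
  refine ⟨fun h => ⟨h.ne, hr x y h⟩, ?_⟩
  rintro ⟨hne, rfl | rfl⟩
  exacts [hcentre y hne, (hcentre x hne.symm).symm]

lemma forall_adj_eq_or_forall_adj_eq (h3 : G.CliqueFree 3)
    (hmeet : ∀ a b c d, G.Adj a b → G.Adj c d → a = c ∨ a = d ∨ b = c ∨ b = d)
    {a b : V} (hab : G.Adj a b) :
    (∀ x y, G.Adj x y → x = a ∨ y = a) ∨ (∀ x y, G.Adj x y → x = b ∨ y = b) := by
  have hother : ∀ {a b x y}, G.Adj a b → G.Adj x y → x ≠ a → y ≠ a → ∃ z ≠ a, G.Adj b z := by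
    intro a b x y hab hxy hxa hya
    rcases hmeet x y a b hxy hab with rfl | rfl | rfl | rfl
    exacts [(hxa rfl).elim, ⟨y, hya, hxy⟩, (hya rfl).elim, ⟨x, hxa, hxy.symm⟩]
  by_contra! hcon
  obtain ⟨⟨x, y, hxy, hxa, hya⟩, ⟨x', y', hxy', hxb, hyb⟩⟩ := hcon
  obtain ⟨z, hza, hbz⟩ := hother hab hxy hxa hya
  obtain ⟨w, hwb, haw⟩ := hother hab.symm hxy' hxb hyb
  -- The edges `bz` and `aw` must meet, and the only way left is `z = w`, a triangle.
  rcases hmeet a w b z haw hbz with h | h | h | h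
  · exact hab.ne h
  · exact hza h.symm
  · exact hwb h
  · subst h
    classical
    exact h3 {a, b, w} (is3Clique_triple_iff.2 ⟨hab, haw, hbz⟩)

lemma exists_eq_starGraph [Nonempty V] (h3 : G.CliqueFree 3) (hG : ∀ v, ∃ w, G.Adj v w)
    (hmeet : ∀ a b c d, G.Adj a b → G.Adj c d → a = c ∨ a = d ∨ b = c ∨ b = d) :
    ∃ r, G = starGraph r := by
  obtain ⟨a⟩ := ‹Nonempty V›
  obtain ⟨b, hab⟩ := hG a
  rcases forall_adj_eq_or_forall_adj_eq h3 hmeet hab with h | h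
  exacts [⟨a, eq_starGraph_of_forall_adj_eq hG h⟩, ⟨b, eq_starGraph_of_forall_adj_eq hG h⟩]

lemma _root_.starGraph_eq_starGraph_zero (n : ℕ) [NeZero n] :
    _root_.starGraph n = starGraph (0 : Fin n) := by
  ext i j
  simp only [_root_.starGraph, starGraph_adj, fromRel_adj, Fin.val_eq_zero_iff]

end SimpleGraph

theorem star_max_numSubtrees (n : ℕ) (hn : 2 ≤ n) :
    numSubtrees (_root_.starGraph n) = 2 ^ (n - 1) + n - 1 ∧
    ∀ (V : Type) [Fintype V] (G : SimpleGraph V), G.IsTree →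
      Fintype.card V = n → ¬ Nonempty (G ≃g _root_.starGraph n) →
      numSubtrees G < numSubtrees (_root_.starGraph n) := by
  have : NeZero n := ⟨by omega⟩
  have hstar : numSubtrees (_root_.starGraph n) = 2 ^ (n - 1) + n - 1 := by
    rw [starGraph_eq_starGraph_zero, numSubtrees_starGraph, Fintype.card_fin]
  refine ⟨hstar, fun V _ G hG hcard hniso => ?_⟩
  subst hcard
  have : Nontrivial V := Fintype.one_lt_card_iff_nontrivial.1 (by omega)
  by_cases hmeet : ∀ a b c d : V, G.Adj a b → G.Adj c d → a = c ∨ a = d ∨ b = c ∨ b = d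
  · obtain ⟨r, rfl⟩ := exists_eq_starGraph (hG.isAcyclic.cliqueFree le_rfl)
      hG.connected.preconnected.exists_adj_of_nontrivial hmeet
    rw [starGraph_eq_starGraph_zero] at hniso
    exact absurd (nonempty_starGraph_iso (Fintype.card_fin _).symm r 0) hniso
  · push Not at hmeet
    obtain ⟨a, b, c, d, hab, hcd, hac, had, hbc, hbd⟩ := hmeet
    have := hG.numSubtrees_add_two_le hab hcd hac had hbc hbd
    omega
end

section
/- Let T be a tree with at least 3 vertices, and let u be a leaf of T adjacent to v. Then the number of subtrees of T containing u is strictly less than the number of subtrees containing v. If T has exactly 2 vertices, these counts are equal. -/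
open SimpleGraph

lemma induce_singleton_connected {V : Type*} (G : SimpleGraph V) (a : V) :
    (G.induce {a}).Connected := by
  rw [connected_iff]
  refine ⟨fun x y => ?_, ⟨⟨a, rfl⟩⟩⟩
  have : x = y := by
    rcases x with ⟨x, hx⟩; rcases y with ⟨y, hy⟩
    simp only [Set.mem_singleton_iff] at hx hy
    exact Subtype.ext (hx.trans hy.symm)
  exact this ▸ Reachable.refl _

lemma induce_pair_connected {V : Type*} {G : SimpleGraph V} {a b : V} (hab : G.Adj a b) :
    (G.induce {a, b}).Connected := by
  rw [connected_iff]
  have ha : a ∈ ({a, b} : Set V) := Or.inl rfl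
  have hb : b ∈ ({a, b} : Set V) := Or.inr rfl
  refine ⟨fun x y => ?_, ⟨⟨a, ha⟩⟩⟩
  have key : ∀ z : ({a, b} : Set V), (G.induce {a, b}).Reachable z ⟨a, ha⟩ := by
    rintro ⟨z, hz⟩
    simp only [Set.mem_insert_iff, Set.mem_singleton_iff] at hz
    rcases hz with rfl | rfl
    · exact Reachable.refl _
    · have h2 : (G.induce ({a, z} : Set V)).Adj ⟨z, hb⟩ ⟨a, ha⟩ := hab.symm
      exact h2.reachable
  exact (key x).trans (key y).symm

lemma leaf_forces_nbr {V : Type*} {G : SimpleGraph V} {u v : V}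
    (hnbr : ∀ w, G.Adj u w → w = v) {S : Set V} (hu : u ∈ S)
    (hc : (G.induce S).Connected) {w : V} (hw : w ∈ S) (hwu : w ≠ u) : v ∈ S := by
  obtain ⟨p⟩ := hc.preconnected ⟨u, hu⟩ ⟨w, hw⟩
  cases p with
  | nil => exact absurd rfl hwu
  | @cons _ x _ h q =>
    have : G.Adj u ↑x := h
    have hx := hnbr _ this
    exact hx ▸ x.2

lemma exists_other_nbr {V : Type*} {G : SimpleGraph V} (hG : G.IsTree) {u v x : V}
    (hnbr : ∀ w, G.Adj u w → w = v) (hxu : x ≠ u) (hxv : x ≠ v) :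
    ∃ w, G.Adj v w ∧ w ≠ u := by
  classical
  obtain ⟨p0⟩ := hG.isConnected.preconnected v x
  obtain ⟨p, hp⟩ : ∃ p : G.Walk v x, p.IsPath := ⟨p0.toPath.1, p0.toPath.2⟩
  cases p with
  | nil => exact absurd rfl hxv
  | @cons _ w _ h q =>
    by_cases hwu : w = u
    · subst hwu
      cases q with
      | nil => exact absurd rfl hxu
      | @cons _ y _ h2 r =>
        have hy : y = v := hnbr _ h2
        subst hy
        exfalso
        have := hp.support_nodup
        simp [Walk.support_cons] at this
    · exact ⟨w, h, hwu⟩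

/-- The number of subtrees of `G` containing the vertex `v`. -/
noncomputable def numSubtreesContaining {V : Type*} [Fintype V] (G : SimpleGraph V) (v : V) : ℕ :=
  {S : Set V | v ∈ S ∧ (G.induce S).Connected}.ncard

theorem leaf_numSubtreesContaining_lt {V : Type*} [Fintype V] (G : SimpleGraph V)
    (hG : G.IsTree) (u v : V) (huv : G.Adj u v) (hleaf : (G.neighborSet u).ncard = 1) :
    (3 ≤ Fintype.card V → numSubtreesContaining G u < numSubtreesContaining G v) ∧
    (Fintype.card V = 2 → numSubtreesContaining G u = numSubtreesContaining G v) := by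
  classical
  have hne : u ≠ v := huv.ne
  -- the only neighbor of u is v
  have hnbr : ∀ w, G.Adj u w → w = v := by
    obtain ⟨a, ha⟩ := Set.ncard_eq_one.mp hleaf
    have hv : v ∈ G.neighborSet u := huv
    rw [ha] at hv
    intro w hw
    have : w ∈ G.neighborSet u := hw
    rw [ha] at this
    rw [Set.mem_singleton_iff] at hv this
    exact this.trans hv.symm
  set A : Set (Set V) := {S | u ∈ S ∧ v ∈ S ∧ (G.induce S).Connected} with hA
  set B : Set (Set V) := {S | v ∈ S ∧ u ∉ S ∧ (G.induce S).Connected} with hB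
  -- decomposition of subtrees containing u
  have hu_eq : {S : Set V | u ∈ S ∧ (G.induce S).Connected} = insert {u} A := by
    ext S
    simp only [Set.mem_setOf_eq, Set.mem_insert_iff, hA]
    constructor
    · rintro ⟨hu, hc⟩
      by_cases hS : S = {u}
      · exact Or.inl hS
      · refine Or.inr ⟨hu, ?_, hc⟩
        have hsub : ¬ S ⊆ {u} := fun h =>
          hS (Set.Subset.antisymm h (Set.singleton_subset_iff.mpr hu))
        obtain ⟨w, hw, hw'⟩ := Set.not_subset.mp hsub
        exact leaf_forces_nbr hnbr hu hc hw (by simpa using hw')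
    · rintro (rfl | ⟨hu, _, hc⟩)
      · exact ⟨rfl, induce_singleton_connected G u⟩
      · exact ⟨hu, hc⟩
  have hv_eq : {S : Set V | v ∈ S ∧ (G.induce S).Connected} = A ∪ B := by
    ext S
    simp only [Set.mem_setOf_eq, Set.mem_union, hA, hB, Set.mem_setOf_eq]
    constructor
    · rintro ⟨hv, hc⟩
      by_cases hu : u ∈ S
      · exact Or.inl ⟨hu, hv, hc⟩
      · exact Or.inr ⟨hv, hu, hc⟩
    · rintro (⟨_, hv, hc⟩ | ⟨hv, _, hc⟩) <;> exact ⟨hv, hc⟩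
  have hsingleton_notmem : ({u} : Set V) ∉ A := by
    intro h
    exact hne (Set.mem_singleton_iff.mp h.2.1).symm
  have hnum_u : numSubtreesContaining G u = A.ncard + 1 := by
    rw [numSubtreesContaining, hu_eq,
      Set.ncard_insert_of_notMem hsingleton_notmem (Set.toFinite A)]
  have hdisj : Disjoint A B := by
    rw [Set.disjoint_left]
    rintro S ⟨hu, _, _⟩ ⟨_, hu', _⟩
    exact hu' hu
  have hnum_v : numSubtreesContaining G v = A.ncard + B.ncard := by
    rw [numSubtreesContaining, hv_eq,
      Set.ncard_union_eq hdisj (Set.toFinite A) (Set.toFinite B)]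
  constructor
  · -- at least 3 vertices
    intro h3
    -- find a third vertex
    have hx : ∃ x : V, x ≠ u ∧ x ≠ v := by
      by_contra hc
      push_neg at hc
      have hsub : (Finset.univ : Finset V) ⊆ {u, v} := by
        intro x _
        by_cases hxu : x = u
        · simp [hxu]
        · simp [hc x hxu]
      have := Finset.card_le_card hsub
      have h2 : ({u, v} : Finset V).card ≤ 2 := Finset.card_insert_le _ _ |>.trans (by simp)
      rw [Finset.card_univ] at this
      omega
    obtain ⟨x, hxu, hxv⟩ := hx
    obtain ⟨w, hvw, hwu⟩ := exists_other_nbr hG hnbr hxu hxv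
    have hwv : w ≠ v := hvw.ne'
    -- {v} and {v, w} are both in B
    have h1 : ({v} : Set V) ∈ B := ⟨rfl, by simpa using hne, induce_singleton_connected G v⟩
    have h2 : ({v, w} : Set V) ∈ B :=
      ⟨Or.inl rfl, by simp only [Set.mem_insert_iff, Set.mem_singleton_iff]; push_neg; exact ⟨hne, Ne.symm hwu⟩, induce_pair_connected hvw⟩
    have hne2 : ({v} : Set V) ≠ ({v, w} : Set V) := by
      intro h
      have : w ∈ ({v} : Set V) := h ▸ (Or.inr rfl : w ∈ ({v, w} : Set V))
      exact hwv (Set.mem_singleton_iff.mp this)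
    have hBcard : 1 < B.ncard :=
      (Set.one_lt_ncard (Set.toFinite B)).mpr ⟨_, h1, _, h2, hne2⟩
    omega
  · -- exactly 2 vertices
    intro h2
    have hcover : ∀ x : V, x = u ∨ x = v := by
      intro x
      by_contra hc
      push_neg at hc
      have h3 : ({x, u, v} : Finset V).card = 3 := by
        rw [Finset.card_insert_of_notMem (by simp [hc.1, hc.2]),
          Finset.card_insert_of_notMem (by simp [hne]), Finset.card_singleton]
      have := Finset.card_le_univ ({x, u, v} : Finset V)
      rw [h2] at this
      omega
    have hAeq : A = {Set.univ} := by
      ext S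
      simp only [hA, Set.mem_setOf_eq, Set.mem_singleton_iff]
      constructor
      · rintro ⟨hu, hv, _⟩
        apply Set.eq_univ_of_forall
        intro x
        rcases hcover x with rfl | rfl <;> assumption
      · rintro rfl
        exact ⟨Set.mem_univ u, Set.mem_univ v,
          (induceUnivIso G).connected_iff.mpr hG.isConnected⟩
    have hBeq : B = {({v} : Set V)} := by
      ext S
      simp only [hB, Set.mem_setOf_eq, Set.mem_singleton_iff]
      constructor
      · rintro ⟨hv, hu, _⟩
        apply Set.eq_singleton_iff_unique_mem.mpr
        refine ⟨hv, fun x hx => ?_⟩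
        rcases hcover x with rfl | rfl
        · exact absurd hx hu
        · rfl
      · rintro rfl
        exact ⟨rfl, by simp only [Set.mem_singleton_iff]; exact hne, induce_singleton_connected G v⟩
    rw [hnum_u, hnum_v, hAeq, hBeq, Set.ncard_singleton, Set.ncard_singleton]
end

section
/- Let T be a tree and x, y, z three vertices with edges xy and yz in T. Then 2 f_T(y) > f_T(x) + f_T(z), where f_T(w) denotes the number of subtrees of T containing w. -/
/-!
In a tree, a subtree that avoids `y` but contains `x` lies on the `x`-side of `y`, so it cannot
contain `z`. Hence the subtrees through `x` and `y`, together with the sets `S ∪ {y}` for subtrees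
`S` through `z` avoiding `y`, are distinct subtrees through `y`, none of them equal to `{y}`.
Adding the symmetric count with `x` and `z` exchanged gives `f(x) + f(z) ≤ 2 f(y) - 2`.
-/

open SimpleGraph

lemma Set.injOn_insert_of_notMem {α : Type*} (a : α) : {S : Set α | a ∉ S}.InjOn (insert a) := by
  intro S hS T hT h
  rw [← insert_sdiff_self_of_notMem hS, h, insert_sdiff_self_of_notMem hT]

namespace SimpleGraph

variable {V : Type*} {G : SimpleGraph V}

lemma connected_induce_singleton (v : V) : (G.induce {v}).Connected := by
  rw [induce_singleton_eq_top]; exact connected_top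

lemma connected_induce_insert {S : Set V} {u w : V} (hS : (G.induce S).Connected)
    (hu : u ∈ S) (huw : G.Adj u w) : (G.induce (insert w S)).Connected := by
  rw [Set.insert_eq, Set.union_comm]
  exact connected_induce_union hS.preconnected (connected_induce_singleton w).preconnected hu rfl
    huw

lemma IsAcyclic.support_subset_of_connected_induce (hG : G.IsAcyclic) {S : Set V}
    (hS : (G.induce S).Connected) {a b : V} (ha : a ∈ S) (hb : b ∈ S) (p : G.Path a b) :
    ∀ v ∈ p.1.support, v ∈ S := by
  classical
  obtain ⟨q⟩ := hS ⟨a, ha⟩ ⟨b, hb⟩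
  have hq : ∀ v ∈ (q.map (Embedding.induce S).toHom).support, v ∈ S := by
    intro v hv
    rw [Walk.support_map, List.mem_map] at hv
    obtain ⟨⟨u, hu⟩, -, rfl⟩ := hv
    exact hu
  rw [(hG.subsingleton_path a b).elim p (q.map (Embedding.induce S).toHom).toPath]
  exact fun v hv => hq v (Walk.support_toPath_subset_support _ hv)

lemma IsAcyclic.mem_of_connected_induce (hG : G.IsAcyclic) {x y z : V} (hxy : G.Adj x y)
    (hyz : G.Adj y z) (hxz : x ≠ z) {S : Set V} (hS : (G.induce S).Connected) (hx : x ∈ S)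
    (hz : z ∈ S) : y ∈ S :=
  hG.support_subset_of_connected_induce hS hx hz
    ⟨.cons hxy (.cons hyz .nil), by simp [hxy.ne, hyz.ne, hxz]⟩ y (by simp)

def subtreesContaining (G : SimpleGraph V) (v : V) : Set (Set V) :=
  {S | v ∈ S ∧ (G.induce S).Connected}

lemma numSubtreesContaining_eq_ncard [Fintype V] (v : V) :
    numSubtreesContaining G v = (G.subtreesContaining v).ncard :=
  rfl

lemma ncard_subtreesContaining_inter_add_ncard_sdiff_lt [Finite V] (hG : G.IsAcyclic) {x y z : V}
    (hxy : G.Adj x y) (hyz : G.Adj y z) (hxz : x ≠ z) :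
    (subtreesContaining G x ∩ {S | y ∈ S}).ncard +
      (subtreesContaining G z \ {S | y ∈ S}).ncard < (subtreesContaining G y).ncard := by
  set A := subtreesContaining G x ∩ {S | y ∈ S}
  set B := subtreesContaining G z \ {S | y ∈ S}
  have hB : (insert y '' B).ncard = B.ncard :=
    ((Set.injOn_insert_of_notMem y).mono fun _ hS => hS.2).ncard_image
  have hdisj : Disjoint A (insert y '' B) := by
    rw [Set.disjoint_left]
    rintro _ ⟨⟨hx, -⟩, -⟩ ⟨S, ⟨⟨hz, hS⟩, hy⟩, rfl⟩
    have hxS : x ∈ S := (Set.mem_insert_iff.1 hx).resolve_left hxy.ne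
    exact hy (hG.mem_of_connected_induce hxy hyz hxz hS hxS hz)
  have hsingleton : {y} ∉ A ∪ insert y '' B := by
    rintro (⟨⟨hx, -⟩, -⟩ | ⟨S, ⟨⟨hz, -⟩, -⟩, hS⟩)
    · exact hxy.ne hx
    · exact hyz.ne (hS ▸ Set.mem_insert_of_mem y hz).symm
  have hsub : insert {y} (A ∪ insert y '' B) ⊆ subtreesContaining G y := by
    rintro _ (rfl | ⟨⟨-, hS⟩, hy⟩ | ⟨S, ⟨⟨hz, hS⟩, -⟩, rfl⟩)
    · exact ⟨rfl, connected_induce_singleton y⟩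
    · exact ⟨hy, hS⟩
    · exact ⟨Set.mem_insert y S, connected_induce_insert hS hz hyz.symm⟩
  calc A.ncard + B.ncard = (A ∪ insert y '' B).ncard := by rw [Set.ncard_union_eq hdisj, hB]
    _ < (insert {y} (A ∪ insert y '' B)).ncard := by
      rw [Set.ncard_insert_of_notMem hsingleton]; omega
    _ ≤ (subtreesContaining G y).ncard := Set.ncard_le_ncard hsub

end SimpleGraph

theorem two_mul_middle_gt {V : Type*} [Fintype V] (G : SimpleGraph V)
    (hG : G.IsTree) (x y z : V) (hxy : G.Adj x y) (hyz : G.Adj y z) (hxz : x ≠ z) :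
    numSubtreesContaining G x + numSubtreesContaining G z <
      2 * numSubtreesContaining G y := by
  have hx_split := Set.ncard_inter_add_ncard_sdiff_eq_ncard (G.subtreesContaining x) {S | y ∈ S}
  have hz_split := Set.ncard_inter_add_ncard_sdiff_eq_ncard (G.subtreesContaining z) {S | y ∈ S}
  have hxz_count :=
    G.ncard_subtreesContaining_inter_add_ncard_sdiff_lt hG.isAcyclic hxy hyz hxz
  have hzx_count :=
    G.ncard_subtreesContaining_inter_add_ncard_sdiff_lt hG.isAcyclic hyz.symm hxy.symm hxz.symm
  simp only [numSubtreesContaining_eq_ncard]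
  omega
end

section
/- Let T be a tree containing a path v_1 v_2 ... v_r with r ≥ 3, where v_1 and v_r are leaves of T. Then there exists an index i with 1 < i < r such that f_T(v_1) < ... < f_T(v_{i-1}) < f_T(v_i) ≥ f_T(v_{i+1}) > ... > f_T(v_r). -/
open SimpleGraph

/-! Write `N(a, b)` for the number of subtrees containing `a` but not `b`. Splitting the subtrees
through `u` by whether they contain a neighbour `v` gives `f u + N(v, u) = f v + N(u, v)`.
Along a path `u v w` of a tree, `S ↦ S ∪ {v}` injects the subtrees counted by `N(u, v)` into
those counted by `N(v, w)` (a subtree through `u` and `w` must pass through `v`) and misses `{v}`,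
so `N` increases strictly along the path, in both directions. Hence `f` is strictly concave along
the path. Since `N(leaf, ·) = 1`, `f` increases at the first step and decreases at the last one,
and a strictly concave sequence with these boundary signs is unimodal. -/

section ConcaveSequence

variable {α : Type*} [AddCommMonoid α] [LinearOrder α] [IsOrderedCancelAddMonoid α]

theorem exists_peak_of_strictConcave {f : ℕ → α} {n : ℕ}
    (hconc : ∀ j < n, f j + f (j + 2) < f (j + 1) + f (j + 1))
    (hstart : f 0 < f 1) (hend : f (n + 1) ≤ f n) :
    ∃ i, 0 < i ∧ i ≤ n ∧ (∀ j < i, f j < f (j + 1)) ∧ f (i + 1) ≤ f i ∧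
      ∀ j, i < j → j ≤ n → f (j + 1) < f j := by
  have step (j : ℕ) (hj : j < n) (h : f (j + 1) ≤ f j) : f (j + 2) < f (j + 1) :=
    lt_of_add_lt_add_left ((hconc j hj).trans_le (add_le_add h le_rfl))
  have hex : ∃ i, f (i + 1) ≤ f i := ⟨n, hend⟩
  have hpeak := Nat.find_spec hex
  refine ⟨Nat.find hex, (Nat.find_pos hex).2 hstart.not_ge, Nat.find_min' hex hend,
    fun j hj => lt_of_not_ge (Nat.find_min hex hj), hpeak, fun j hij hjn => ?_⟩
  induction j, hij using Nat.le_induction with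
  | base => exact step _ (by omega) hpeak
  | succ j hij ih => exact step j (by omega) (ih (by omega)).le

end ConcaveSequence

namespace SimpleGraph

variable {V : Type*} {G : SimpleGraph V} {S : Set V} {u v w : V}

theorem induce_insert_connected_of_adj (hS : (G.induce S).Connected) (hu : u ∈ S)
    (huv : G.Adj u v) : (G.induce (insert v S)).Connected := by
  rw [← Set.union_singleton]
  exact connected_induce_union hS.preconnected .of_subsingleton hu rfl huv

theorem Preconnected.exists_walk_support_subset_of_induce (hS : (G.induce S).Preconnected)
    (hu : u ∈ S) (hw : w ∈ S) : ∃ q : G.Walk u w, ∀ x ∈ q.support, x ∈ S := by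
  obtain ⟨q⟩ := hS ⟨u, hu⟩ ⟨w, hw⟩
  refine ⟨q.map (Embedding.induce S).toHom, fun x hx => ?_⟩
  replace hx : x ∈ q.support.map (Embedding.induce (G := G) S).toHom := by
    rwa [← Walk.support_map]
  obtain ⟨y, -, rfl⟩ := List.mem_map.1 hx
  exact y.2

theorem IsAcyclic.mem_of_induce_connected (hG : G.IsAcyclic) (huv : G.Adj u v)
    (hvw : G.Adj v w) (huw : u ≠ w) (hS : (G.induce S).Connected) (hu : u ∈ S) (hw : w ∈ S) :
    v ∈ S := by
  classical
  obtain ⟨q, hq⟩ := hS.preconnected.exists_walk_support_subset_of_induce hu hw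
  have hpath : (Walk.cons huv (Walk.cons hvw Walk.nil)).IsPath := by
    simp [Walk.isPath_def, huv.ne, hvw.ne, huw]
  have := congrArg Subtype.val ((hG.subsingleton_path u w).elim q.toPath ⟨_, hpath⟩)
  exact hq v (q.support_toPath_subset_support (by simp [this]))

variable (G) in
noncomputable def numSubtreesContainingAvoiding (a b : V) : ℕ :=
  {S : Set V | a ∈ S ∧ b ∉ S ∧ (G.induce S).Connected}.ncard

theorem numSubtreesContainingAvoiding_pos [Finite V] (huv : u ≠ v) :
    0 < G.numSubtreesContainingAvoiding u v :=
  (Set.ncard_pos (Set.toFinite _)).2 ⟨{u}, rfl, huv.symm, ⟨.of_subsingleton⟩⟩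

theorem numSubtreesContainingAvoiding_eq_one_of_leaf (hleaf : (G.neighborSet u).ncard = 1)
    (huv : G.Adj u v) : G.numSubtreesContainingAvoiding u v = 1 := by
  have hnbr : G.neighborSet u = {v} := by
    obtain ⟨a, ha⟩ := Set.ncard_eq_one.1 hleaf
    rwa [Set.mem_singleton_iff.1 (ha ▸ huv : v ∈ ({a} : Set V))]
  refine Set.ncard_eq_one.2 ⟨{u}, Set.eq_singleton_iff_unique_mem.2
    ⟨⟨rfl, huv.ne.symm, ⟨.of_subsingleton⟩⟩, fun S ⟨hu, hv, hS⟩ => ?_⟩⟩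
  refine Set.eq_singleton_iff_unique_mem.2 ⟨hu, fun x hx => by_contra fun hxu => ?_⟩
  have : Nontrivial S := ⟨⟨⟨x, hx⟩, ⟨u, hu⟩, fun h => hxu (congrArg Subtype.val h)⟩⟩
  obtain ⟨y, hy⟩ := hS.preconnected.exists_adj_of_nontrivial ⟨u, hu⟩
  have hyv : (y : V) ∈ G.neighborSet u := hy
  rw [hnbr, Set.mem_singleton_iff] at hyv
  exact hv (hyv ▸ y.2)

theorem numSubtreesContainingAvoiding_lt [Finite V] (hG : G.IsAcyclic) (huv : G.Adj u v)
    (hvw : G.Adj v w) (huw : u ≠ w) :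
    G.numSubtreesContainingAvoiding u v < G.numSubtreesContainingAvoiding v w := by
  set A := {S : Set V | u ∈ S ∧ v ∉ S ∧ (G.induce S).Connected}
  set B := {S : Set V | v ∈ S ∧ w ∉ S ∧ (G.induce S).Connected}
  have hinj : Set.InjOn (insert v) A := fun S₁ h₁ S₂ h₂ h => by
    simpa [Set.insert_sdiff_self_of_notMem, h₁.2.1, h₂.2.1] using congrArg (· \ {v}) h
  have hmaps : insert v '' A ⊆ B := by
    rintro _ ⟨S, ⟨hu, hv, hS⟩, rfl⟩
    refine ⟨Set.mem_insert v S, ?_, induce_insert_connected_of_adj hS hu huv⟩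
    rintro (h | h)
    · exact hvw.ne h.symm
    · exact hv (hG.mem_of_induce_connected huv hvw huw hS hu h)
  have hsingleton : {v} ∉ insert v '' A := by
    rintro ⟨S, ⟨hu, -⟩, hS⟩
    exact huv.ne (Set.mem_singleton_iff.1 (hS ▸ Set.mem_insert_of_mem v hu))
  calc A.ncard = (insert v '' A).ncard := (hinj.ncard_image).symm
    _ < B.ncard := Set.ncard_lt_ncard ((Set.ssubset_iff_of_subset hmaps).2
        ⟨{v}, ⟨rfl, hvw.ne.symm, ⟨.of_subsingleton⟩⟩, hsingleton⟩) (Set.toFinite B)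

variable [Fintype V]

theorem numSubtreesContaining_eq_avoiding_add (a b : V) :
    numSubtreesContaining G a = G.numSubtreesContainingAvoiding a b +
      {S : Set V | a ∈ S ∧ b ∈ S ∧ (G.induce S).Connected}.ncard := by
  rw [numSubtreesContaining, numSubtreesContainingAvoiding,
    ← Set.ncard_union_eq ?_ (Set.toFinite _) (Set.toFinite _)]
  · congr 1
    ext S
    by_cases b ∈ S <;> simp_all
  · exact Set.disjoint_left.2 fun S hS hS' => hS.2.1 hS'.2.1

theorem numSubtreesContaining_add_avoiding (u v : V) :
    numSubtreesContaining G u + G.numSubtreesContainingAvoiding v u =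
      numSubtreesContaining G v + G.numSubtreesContainingAvoiding u v := by
  have hcomm : {S : Set V | u ∈ S ∧ v ∈ S ∧ (G.induce S).Connected} =
      {S : Set V | v ∈ S ∧ u ∈ S ∧ (G.induce S).Connected} := by
    simp only [and_left_comm]
  rw [numSubtreesContaining_eq_avoiding_add u v, numSubtreesContaining_eq_avoiding_add v u, hcomm]
  ring

theorem numSubtreesContaining_add_lt (hG : G.IsAcyclic) (huv : G.Adj u v) (hvw : G.Adj v w)
    (huw : u ≠ w) :
    numSubtreesContaining G u + numSubtreesContaining G w <
      numSubtreesContaining G v + numSubtreesContaining G v := by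
  have h₁ := numSubtreesContaining_add_avoiding (G := G) u v
  have h₂ := numSubtreesContaining_add_avoiding (G := G) v w
  have h₃ := numSubtreesContainingAvoiding_lt hG huv hvw huw
  have h₄ := numSubtreesContainingAvoiding_lt hG hvw.symm huv.symm huw.symm
  omega

theorem numSubtreesContaining_lt_of_leaf (hG : G.IsAcyclic) (hleaf : (G.neighborSet u).ncard = 1)
    (huv : G.Adj u v) (hvw : G.Adj v w) (huw : u ≠ w) :
    numSubtreesContaining G u < numSubtreesContaining G v := by
  have h₁ := numSubtreesContaining_add_avoiding (G := G) u v
  have h₂ := numSubtreesContainingAvoiding_eq_one_of_leaf hleaf huv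
  have h₃ := numSubtreesContainingAvoiding_lt hG hvw.symm huv.symm huw.symm
  have h₄ := numSubtreesContainingAvoiding_pos (G := G) hvw.ne.symm
  omega

end SimpleGraph

/-- If `p 0, p 1, ..., p (r-1)` is a path in the tree `G` whose endpoints are leaves of `G`,
then there is an internal index `i` where `f_G` along the path increases strictly before `i`,
weakly decreases from `i` to `i+1`, and decreases strictly afterwards. -/
theorem unimodal_along_path {V : Type*} [Fintype V] (G : SimpleGraph V)
    (hG : G.IsTree) (r : ℕ) (hr : 3 ≤ r) (p : ℕ → V)
    (hadj : ∀ i, i < r - 1 → G.Adj (p i) (p (i + 1)))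
    (hinj : ∀ i j, i < r → j < r → p i = p j → i = j)
    (hleaf0 : (G.neighborSet (p 0)).ncard = 1)
    (hleafr : (G.neighborSet (p (r - 1))).ncard = 1) :
    ∃ i, 0 < i ∧ i < r - 1 ∧
      (∀ j, j < i → numSubtreesContaining G (p j) < numSubtreesContaining G (p (j + 1))) ∧
      numSubtreesContaining G (p (i + 1)) ≤ numSubtreesContaining G (p i) ∧
      (∀ j, i < j → j < r - 1 →
        numSubtreesContaining G (p (j + 1)) < numSubtreesContaining G (p j)) := by
  obtain ⟨n, rfl⟩ : ∃ n, r = n + 3 := ⟨r - 3, by omega⟩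
  have hne (i j : ℕ) (hi : i < n + 3) (hj : j < n + 3) (hij : i ≠ j) : p i ≠ p j :=
    fun h => hij (hinj i j hi hj h)
  obtain ⟨i, hi₀, hin, hinc, hpeak, hdec⟩ :=
    exists_peak_of_strictConcave (f := fun j => numSubtreesContaining G (p j)) (n := n + 1)
      (fun j hj => numSubtreesContaining_add_lt hG.isAcyclic (hadj j (by omega))
        (hadj (j + 1) (by omega)) (hne j (j + 2) (by omega) (by omega) (by omega)))
      (numSubtreesContaining_lt_of_leaf hG.isAcyclic hleaf0 (hadj 0 (by omega))
        (hadj 1 (by omega)) (hne 0 2 (by omega) (by omega) (by omega)))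
      (numSubtreesContaining_lt_of_leaf hG.isAcyclic hleafr (hadj (n + 1) (by omega)).symm
        (hadj n (by omega)).symm (hne (n + 2) n (by omega) (by omega) (by omega))).le
  exact ⟨i, hi₀, by omega, hinc, hpeak, fun j hij hj => hdec j hij (by omega)⟩
end

section
/- Let T be a tree with vertices x, y, and let X and Y be rooted trees (disjoint from T and each other). Let T' be obtained by identifying the root of X with x and the root of Y with y, and T'' by identifying the root of X with y and the root of Y with x. If f_T(x) > f_T(y) and f_X(root) < f_Y(root), then F(T'') > F(T'). -/
open SimpleGraph

/-- The graph obtained from `T` and the rooted tree `(X, a0)` by identifying the root `a0`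
of `X` with the vertex `x` of `T`. -/
def glue {V A : Type*} (T : SimpleGraph V) (x : V) (X : SimpleGraph A) (a0 : A) :
    SimpleGraph (V ⊕ {a : A // a ≠ a0}) :=
  SimpleGraph.fromRel (fun p q =>
    match p, q with
    | Sum.inl v, Sum.inl w => T.Adj v w
    | Sum.inr a, Sum.inr b => X.Adj a.1 b.1
    | Sum.inl v, Sum.inr a => v = x ∧ X.Adj a0 a.1
    | Sum.inr _, Sum.inl _ => False)

/-!
A connected vertex set of `glue G w X a0` that avoids the glue vertex lies on one side, so it
is a subtree of `G` avoiding `w` or of `X` avoiding `a0`; one that contains the glue vertex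
splits uniquely into a subtree of `G` containing `w` and a subtree of `X` containing `a0`.
Hence `F(G ∘_w X) = F(G) + F(X) - f_G(w) - f_X(a0) + f_G(w) f_X(a0)` and, for `v` in `G`,
`f(v) = f_G(v) + f_G(v, w) (f_X(a0) - 1)`, where `f_G(v, w)` counts subtrees containing both.
Applying this to both gluing orders, everything symmetric in `x` and `y` cancels and
`F(T'') - F(T') = (f_T(x) - f_T(y)) (f_Y(b0) - f_X(a0)) > 0`.

Connectivity passes between the glued graph and its two pieces through the inclusions and
through the retractions that collapse the other piece onto the glue vertex.
-/

open Set

section Connectivity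

variable {α β : Type*} {G : SimpleGraph α} {H : SimpleGraph β}

theorem SimpleGraph.Reachable.map_of_adj_or_eq (f : α → β)
    (hf : ∀ ⦃u v⦄, G.Adj u v → f u = f v ∨ H.Adj (f u) (f v)) {u v : α}
    (h : G.Reachable u v) : H.Reachable (f u) (f v) := by
  rw [reachable_iff_reflTransGen] at h ⊢
  refine Relation.ReflTransGen.lift' (r := G.Adj) f (fun a b hab => ?_) _ _ h
  rcases hf hab with e | e
  · change Relation.ReflTransGen H.Adj (f a) (f b)
    rw [e]
  · exact .single e

theorem SimpleGraph.Connected.induce_of_surjOn {s : Set α} {t : Set β} (f : α → β)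
    (hmaps : MapsTo f s t) (hsurj : SurjOn f s t)
    (hf : ∀ u ∈ s, ∀ v ∈ s, G.Adj u v → f u = f v ∨ H.Adj (f u) (f v))
    (h : (G.induce s).Connected) : (H.induce t).Connected := by
  obtain ⟨⟨a, ha⟩⟩ := h.nonempty
  refine (connected_iff _).2 ⟨?_, ⟨⟨f a, hmaps ha⟩⟩⟩
  rintro ⟨_, hp⟩ ⟨_, hq⟩
  obtain ⟨a, ha, rfl⟩ := hsurj hp
  obtain ⟨b, hb, rfl⟩ := hsurj hq
  exact (h.preconnected ⟨a, ha⟩ ⟨b, hb⟩).map_of_adj_or_eq (hmaps.restrict f s t)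
    fun u v huv => by simpa [Subtype.ext_iff] using hf u u.2 v v.2 huv

theorem SimpleGraph.Connected.induce_apply_eq {s : Set α} (h : (G.induce s).Connected)
    (f : α → β) (hf : ∀ u ∈ s, ∀ v ∈ s, G.Adj u v → f u = f v) {u v : α}
    (hu : u ∈ s) (hv : v ∈ s) : f u = f v :=
  reachable_bot.1 <| (h.preconnected ⟨u, hu⟩ ⟨v, hv⟩).map_of_adj_or_eq
    (H := ⊥) (fun x : s => f x) fun x y hxy => Or.inl (hf x x.2 y y.2 hxy)

theorem SimpleGraph.Connected.induce_preimage_of_leftInverse {f : α → β} {g : β → α}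
    (hgf : Function.LeftInverse g f)
    (hg : ∀ ⦃p q⦄, H.Adj p q → g p = g q ∨ G.Adj (g p) (g q)) {S : Set β}
    (hS : ∀ p ∈ S, f (g p) ∈ S) (h : (H.induce S).Connected) :
    (G.induce (f ⁻¹' S)).Connected :=
  h.induce_of_surjOn g hS (fun a ha => ⟨f a, ha, hgf a⟩) fun _ _ _ _ hpq => hg hpq

theorem SimpleGraph.connected_induce_image_iff {f : α → β} {g : β → α}
    (hgf : Function.LeftInverse g f) (hf : ∀ ⦃a b⦄, G.Adj a b → H.Adj (f a) (f b))
    (hg : ∀ ⦃p q⦄, H.Adj p q → g p = g q ∨ G.Adj (g p) (g q)) (s : Set α) :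
    (H.induce (f '' s)).Connected ↔ (G.induce s).Connected := by
  refine ⟨fun h => ?_, fun h => h.induce_of_surjOn f (mapsTo_image f s) (surjOn_image f s)
    fun _ _ _ _ hab => Or.inr (hf hab)⟩
  rw [← preimage_image_eq s hgf.injective]
  refine h.induce_preimage_of_leftInverse hgf hg ?_
  rintro _ ⟨a, ha, rfl⟩
  rw [hgf a]
  exact mem_image_of_mem f ha

end Connectivity

theorem Set.ncard_setOf_and_add_ncard_setOf_not_and {α : Type*} [Finite α] (P Q : α → Prop) :
    {x | Q x ∧ P x}.ncard + {x | ¬Q x ∧ P x}.ncard = {x | P x}.ncard := by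
  rw [← ncard_inter_add_ncard_sdiff_eq_ncard {x | P x} {x | Q x}]
  congr 2 <;> ext x <;> simp [and_comm]

section SubtreeCounts

variable {V : Type*} (H : SimpleGraph V)

noncomputable def numSubtreesContainingPair (u v : V) : ℕ :=
  {S : Set V | u ∈ S ∧ v ∈ S ∧ (H.induce S).Connected}.ncard

theorem numSubtreesContainingPair_comm (u v : V) :
    numSubtreesContainingPair H u v = numSubtreesContainingPair H v u := by
  simp only [numSubtreesContainingPair, and_left_comm (a := u ∈ _)]

theorem numSubtrees_eq_add [Fintype V] (v : V) :
    numSubtrees H =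
      numSubtreesContaining H v + {S : Set V | v ∉ S ∧ (H.induce S).Connected}.ncard := by
  rw [numSubtreesContaining, ncard_setOf_and_add_ncard_setOf_not_and, numSubtrees]
  congr 1
  ext S
  exact and_iff_right_of_imp fun h => nonempty_coe_sort.1 h.nonempty

theorem numSubtreesContaining_eq_add [Fintype V] (u v : V) :
    numSubtreesContaining H v = numSubtreesContainingPair H u v +
      {S : Set V | u ∉ S ∧ v ∈ S ∧ (H.induce S).Connected}.ncard :=
  (ncard_setOf_and_add_ncard_setOf_not_and
    (fun S => v ∈ S ∧ (H.induce S).Connected) (u ∈ ·)).symm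

end SubtreeCounts

section Glue

variable {W A : Type*} {G : SimpleGraph W} {X : SimpleGraph A} {w : W} {a0 : A}

@[simp] theorem glue_adj_inl_inl {u v : W} :
    (glue G w X a0).Adj (.inl u) (.inl v) ↔ G.Adj u v := by
  simp only [glue, SimpleGraph.fromRel_adj]
  exact ⟨fun h => h.2.elim id SimpleGraph.Adj.symm, fun h => ⟨by simp [h.ne], .inl h⟩⟩

@[simp] theorem glue_adj_inr_inr {a b : {a : A // a ≠ a0}} :
    (glue G w X a0).Adj (.inr a) (.inr b) ↔ X.Adj a b := by
  simp only [glue, SimpleGraph.fromRel_adj]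
  exact ⟨fun h => h.2.elim id SimpleGraph.Adj.symm,
    fun h => ⟨by simp [Subtype.ext_iff, h.ne], .inl h⟩⟩

@[simp] theorem glue_adj_inl_inr {v : W} {a : {a : A // a ≠ a0}} :
    (glue G w X a0).Adj (.inl v) (.inr a) ↔ v = w ∧ X.Adj a0 a := by
  simp only [glue, SimpleGraph.fromRel_adj]
  exact ⟨fun h => h.2.elim id False.elim, fun h => ⟨by simp, .inl h⟩⟩

@[simp] theorem glue_adj_inr_inl {v : W} {a : {a : A // a ≠ a0}} :
    (glue G w X a0).Adj (.inr a) (.inl v) ↔ v = w ∧ X.Adj a0 a := by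
  rw [SimpleGraph.adj_comm, glue_adj_inl_inr]

open Classical in
noncomputable def glueRight (w : W) (a0 : A) (a : A) : W ⊕ {a : A // a ≠ a0} :=
  if h : a = a0 then .inl w else .inr ⟨a, h⟩

def glueRetractLeft (w : W) : W ⊕ {a : A // a ≠ a0} → W :=
  Sum.elim id fun _ => w

def glueRetractRight (a0 : A) : W ⊕ {a : A // a ≠ a0} → A :=
  Sum.elim (fun _ => a0) Subtype.val

@[simp] theorem glueRight_self : glueRight w a0 a0 = .inl w := by
  simp [glueRight]

@[simp] theorem glueRight_val (b : {a : A // a ≠ a0}) : glueRight w a0 b = .inr b := by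
  simp [glueRight, b.2]

theorem glueRight_eq_inl_iff {a : A} {v : W} : glueRight w a0 a = .inl v ↔ a = a0 ∧ v = w := by
  by_cases h : a = a0 <;> simp [glueRight, h, eq_comm]

theorem leftInverse_glueRetractRight_glueRight :
    Function.LeftInverse (glueRetractRight (W := W) a0) (glueRight w a0) := by
  intro a
  by_cases h : a = a0 <;> simp [glueRight, glueRetractRight, h]

theorem glue_adj_glueRight {a b : A} (h : X.Adj a b) :
    (glue G w X a0).Adj (glueRight w a0 a) (glueRight w a0 b) := by
  by_cases ha : a = a0 <;> by_cases hb : b = a0 <;> subst_vars <;>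
    simp_all [glueRight, h.symm]

theorem glue_adj_glueRetractLeft {p q : W ⊕ {a : A // a ≠ a0}} (h : (glue G w X a0).Adj p q) :
    glueRetractLeft w p = glueRetractLeft w q ∨
      G.Adj (glueRetractLeft w p) (glueRetractLeft w q) := by
  rcases p with v | a <;> rcases q with u | b <;> simp_all [glueRetractLeft]

theorem glue_adj_glueRetractRight {p q : W ⊕ {a : A // a ≠ a0}} (h : (glue G w X a0).Adj p q) :
    glueRetractRight a0 p = glueRetractRight a0 q ∨
      X.Adj (glueRetractRight a0 p) (glueRetractRight a0 q) := by
  rcases p with v | a <;> rcases q with u | b <;> simp_all [glueRetractRight, adj_comm]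

theorem glue_adj_isLeft {p q : W ⊕ {a : A // a ≠ a0}} (h : (glue G w X a0).Adj p q) :
    p.isLeft = q.isLeft ∨ p = .inl w ∨ q = .inl w := by
  rcases p with v | a <;> rcases q with u | b <;> simp_all

theorem image_inl_preimage_union_image_glueRight_preimage (S : Set (W ⊕ {a : A // a ≠ a0})) :
    .inl '' (.inl ⁻¹' S) ∪ glueRight w a0 '' (glueRight w a0 ⁻¹' S) = S := by
  have : range .inl ∪ range (glueRight w a0) = univ := by
    refine eq_univ_of_forall fun p => ?_
    rcases p with v | b
    · exact .inl ⟨v, rfl⟩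
    · exact .inr ⟨b, glueRight_val b⟩
  rw [image_preimage_eq_inter_range, image_preimage_eq_inter_range, ← inter_union_distrib_left,
    this, inter_univ]

theorem preimage_inl_union_image_glueRight {L : Set W} {R : Set A} (h : w ∈ L ↔ a0 ∈ R) :
    .inl ⁻¹' (.inl '' L ∪ glueRight w a0 '' R) = L := by
  ext v
  simp only [preimage_union, preimage_image_eq _ Sum.inl_injective, mem_union, mem_preimage,
    mem_image, glueRight_eq_inl_iff]
  aesop

theorem preimage_glueRight_union_image_glueRight {L : Set W} {R : Set A}
    (h : w ∈ L ↔ a0 ∈ R) :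
    glueRight w a0 ⁻¹' (.inl '' L ∪ glueRight w a0 '' R) = R := by
  ext a
  simp only [preimage_union, mem_union, mem_preimage, mem_image, eq_comm (a := Sum.inl _),
    preimage_image_eq _ leftInverse_glueRetractRight_glueRight.injective, glueRight_eq_inl_iff]
  aesop

theorem connected_induce_glue_image_inl (L : Set W) :
    ((glue G w X a0).induce (.inl '' L)).Connected ↔ (G.induce L).Connected :=
  SimpleGraph.connected_induce_image_iff (g := glueRetractLeft w) (fun _ => rfl)
    (fun _ _ h => glue_adj_inl_inl.2 h) (fun _ _ h => glue_adj_glueRetractLeft h) L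

theorem connected_induce_glue_image_glueRight (R : Set A) :
    ((glue G w X a0).induce (glueRight w a0 '' R)).Connected ↔ (X.induce R).Connected :=
  SimpleGraph.connected_induce_image_iff leftInverse_glueRetractRight_glueRight
    (fun _ _ h => glue_adj_glueRight h) (fun _ _ h => glue_adj_glueRetractRight h) R

variable {S : Set (W ⊕ {a : A // a ≠ a0})}

theorem connected_induce_glue_iff_of_inl_mem (hS : .inl w ∈ S) :
    ((glue G w X a0).induce S).Connected ↔
      (G.induce (.inl ⁻¹' S)).Connected ∧ (X.induce (glueRight w a0 ⁻¹' S)).Connected := by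
  refine ⟨fun h => ⟨?_, ?_⟩, fun ⟨hL, hR⟩ => ?_⟩
  · refine h.induce_preimage_of_leftInverse (g := glueRetractLeft w) (fun _ => rfl)
      (fun _ _ => glue_adj_glueRetractLeft) ?_
    rintro (v | b) hp
    exacts [hp, hS]
  · refine h.induce_preimage_of_leftInverse leftInverse_glueRetractRight_glueRight
      (fun _ _ => glue_adj_glueRetractRight) ?_
    rintro (v | b) hp
    · simpa [glueRetractRight] using hS
    · simpa [glueRetractRight] using hp
  · rw [← image_inl_preimage_union_image_glueRight_preimage S]
    refine induce_union_connected ((connected_induce_glue_image_inl _).2 hL).preconnected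
      ((connected_induce_glue_image_glueRight _).2 hR).preconnected ⟨.inl w, ?_, a0, ?_⟩
    · exact mem_image_of_mem _ hS
    · simpa using hS

theorem connected_induce_glue_iff_of_preimage_glueRight_eq_empty
    (hR : glueRight w a0 ⁻¹' S = ∅) :
    ((glue G w X a0).induce S).Connected ↔ (G.induce (.inl ⁻¹' S)).Connected := by
  conv_lhs => rw [← image_inl_preimage_union_image_glueRight_preimage S, hR, image_empty,
    union_empty]
  exact connected_induce_glue_image_inl _

theorem connected_induce_glue_iff_of_preimage_inl_eq_empty (hL : .inl ⁻¹' S = (∅ : Set W)) :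
    ((glue G w X a0).induce S).Connected ↔ (X.induce (glueRight w a0 ⁻¹' S)).Connected := by
  conv_lhs => rw [← image_inl_preimage_union_image_glueRight_preimage (w := w) S, hL,
    image_empty, empty_union]
  exact connected_induce_glue_image_glueRight _

theorem connected_induce_glue_iff_of_inl_not_mem (hS : .inl w ∉ S) :
    ((glue G w X a0).induce S).Connected ↔
      (G.induce (.inl ⁻¹' S)).Connected ∧ glueRight w a0 ⁻¹' S = ∅ ∨
        .inl ⁻¹' S = (∅ : Set W) ∧ (X.induce (glueRight w a0 ⁻¹' S)).Connected := by
  refine ⟨fun h => ?_, ?_⟩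
  · rcases (Sum.inl ⁻¹' S : Set W).eq_empty_or_nonempty with hL | ⟨v, hv⟩
    · exact .inr ⟨hL, (connected_induce_glue_iff_of_preimage_inl_eq_empty hL).1 h⟩
    have hR : glueRight w a0 ⁻¹' S = ∅ := by
      refine eq_empty_of_forall_notMem fun a ha => ?_
      by_cases h0 : a = a0
      · subst h0
        exact hS (by simpa using ha)
      -- an edge that avoids the glue vertex does not change sides
      have := h.induce_apply_eq Sum.isLeft (fun p hp q hq hpq => ?_) hv ha
      · simp [glueRight, h0] at this
      · rcases glue_adj_isLeft hpq with h' | rfl | rfl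
        exacts [h', absurd hp hS, absurd hq hS]
    exact .inl ⟨(connected_induce_glue_iff_of_preimage_glueRight_eq_empty hR).1 h, hR⟩
  · rintro (⟨hL, hR⟩ | ⟨hL, hR⟩)
    exacts [(connected_induce_glue_iff_of_preimage_glueRight_eq_empty hR).2 hL,
      (connected_induce_glue_iff_of_preimage_inl_eq_empty hL).2 hR]

theorem ncard_glue_eq_ncard {s : Set (Set (W ⊕ {a : A // a ≠ a0}))}
    {t : Set (Set W × Set A)} (ht : ∀ LR ∈ t, w ∈ LR.1 ↔ a0 ∈ LR.2)
    (h : ∀ S, S ∈ s ↔ (.inl ⁻¹' S, glueRight w a0 ⁻¹' S) ∈ t) :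
    s.ncard = t.ncard := by
  refine BijOn.ncard_eq (f := fun S => (.inl ⁻¹' S, glueRight w a0 ⁻¹' S))
    ⟨fun S hS => (h S).1 hS, fun S _ T _ hST => ?_, fun ⟨L, R⟩ hLR => ?_⟩
  · simp only [Prod.ext_iff] at hST
    rw [← image_inl_preimage_union_image_glueRight_preimage (w := w) S, hST.1, hST.2,
      image_inl_preimage_union_image_glueRight_preimage]
  · have hL := preimage_inl_union_image_glueRight (ht _ hLR)
    have hR := preimage_glueRight_union_image_glueRight (ht _ hLR)
    exact ⟨.inl '' L ∪ glueRight w a0 '' R, (h _).2 (by rwa [hL, hR]), by simp only [hL, hR]⟩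

theorem ncard_glue_inl_mem [Fintype A] (p : Set W → Prop) :
    {S | .inl w ∈ S ∧ p (.inl ⁻¹' S) ∧ ((glue G w X a0).induce S).Connected}.ncard =
      {L | w ∈ L ∧ p L ∧ (G.induce L).Connected}.ncard * numSubtreesContaining X a0 := by
  refine (ncard_glue_eq_ncard (fun _ h => iff_of_true h.1.1 h.2.1) fun S => ?_).trans ncard_prod
  by_cases hS : .inl w ∈ S
  · simp only [mem_ofPred_eq, mem_prod, mem_preimage, glueRight_self, hS,
      connected_induce_glue_iff_of_inl_mem hS]
    tauto
  · simp [hS]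

theorem ncard_glue_inl_not_mem [Finite W] [Finite A] (p : Set W → Prop) :
    {S | .inl w ∉ S ∧ p (.inl ⁻¹' S) ∧ ((glue G w X a0).induce S).Connected}.ncard =
      {L | w ∉ L ∧ p L ∧ (G.induce L).Connected}.ncard +
        {R | a0 ∉ R ∧ p ∅ ∧ (X.induce R).Connected}.ncard := by
  have hdisj : Disjoint ({L | w ∉ L ∧ p L ∧ (G.induce L).Connected} ×ˢ {∅})
      ({∅} ×ˢ {R | a0 ∉ R ∧ p ∅ ∧ (X.induce R).Connected}) := by
    refine disjoint_left.2 ?_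
    rintro ⟨L, R⟩ ⟨⟨-, -, hL⟩, -⟩ ⟨hL', -⟩
    obtain ⟨⟨v, hv⟩⟩ := hL.nonempty
    exact (hL' ▸ hv : v ∈ (∅ : Set W))
  rw [ncard_glue_eq_ncard (w := w) (t := _ ∪ _) ?_ fun S => ?_, ncard_union_eq hdisj,
    ncard_prod, ncard_prod, ncard_singleton, ncard_singleton, mul_one, one_mul]
  · rintro ⟨L, R⟩ (⟨⟨hw, -⟩, rfl⟩ | ⟨rfl, ha, -⟩)
    exacts [iff_of_false hw (notMem_empty a0), iff_of_false (notMem_empty w) ha]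
  by_cases hS : .inl w ∈ S
  · simp [hS]
  have ha : a0 ∉ glueRight w a0 ⁻¹' S := by simpa using hS
  simp only [mem_ofPred_eq, mem_union, mem_prod, mem_singleton_iff,
    connected_induce_glue_iff_of_inl_not_mem hS]
  constructor
  · rintro ⟨-, hp, ⟨hL, hR⟩ | ⟨hL, hR⟩⟩
    · exact .inl ⟨⟨hS, hp, hL⟩, hR⟩
    · exact .inr ⟨hL, ha, hL ▸ hp, hR⟩
  · rintro (⟨⟨-, hp, hL⟩, hR⟩ | ⟨hL, -, hp, hR⟩)
    · exact ⟨hS, hp, .inl ⟨hL, hR⟩⟩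
    · exact ⟨hS, hL ▸ hp, .inr ⟨hL, hR⟩⟩

variable [Fintype W] [Fintype A] [DecidableEq A]

theorem numSubtreesContaining_glue_inl_self :
    numSubtreesContaining (glue G w X a0) (.inl w) =
      numSubtreesContaining G w * numSubtreesContaining X a0 := by
  have h := ncard_glue_inl_mem (G := G) (X := X) (w := w) (a0 := a0) fun _ => True
  simp only [true_and] at h
  exact h

theorem numSubtrees_glue :
    numSubtrees (glue G w X a0) + numSubtreesContaining X a0 + numSubtreesContaining G w =
      numSubtrees G + numSubtrees X + numSubtreesContaining G w * numSubtreesContaining X a0 := by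
  have hΓ := numSubtrees_eq_add (glue G w X a0) (.inl w)
  have hG := numSubtrees_eq_add G w
  have hX := numSubtrees_eq_add X a0
  have hout := ncard_glue_inl_not_mem (G := G) (X := X) (w := w) (a0 := a0) fun _ => True
  simp only [true_and] at hout
  rw [numSubtreesContaining_glue_inl_self] at hΓ
  omega

theorem numSubtreesContaining_glue_inl (v : W) :
    numSubtreesContaining (glue G w X a0) (.inl v) + numSubtreesContainingPair G w v =
      numSubtreesContaining G v + numSubtreesContainingPair G w v * numSubtreesContaining X a0 := by
  have hΓ := numSubtreesContaining_eq_add (glue G w X a0) (.inl w) (.inl v)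
  have hG := numSubtreesContaining_eq_add G w v
  have hin := ncard_glue_inl_mem (G := G) (X := X) (w := w) (a0 := a0) (v ∈ ·)
  have hout := ncard_glue_inl_not_mem (G := G) (X := X) (w := w) (a0 := a0) (v ∈ ·)
  simp only [mem_preimage, notMem_empty, false_and, and_false, ofPred_false, ncard_empty,
    add_zero] at hin hout
  rw [numSubtreesContainingPair] at hΓ hG ⊢
  omega

end Glue

theorem switch_subtrees_compare_general {V A B : Type*} [Fintype V] [Fintype A] [Fintype B]
    [DecidableEq A] [DecidableEq B]
    (T : SimpleGraph V) (X : SimpleGraph A) (Y : SimpleGraph B) (a0 : A) (b0 : B)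
    (x y : V)
    (hfT : numSubtreesContaining T y < numSubtreesContaining T x)
    (hfXY : numSubtreesContaining X a0 < numSubtreesContaining Y b0) :
    numSubtrees (glue (glue T x X a0) (Sum.inl y) Y b0) <
      numSubtrees (glue (glue T y X a0) (Sum.inl x) Y b0) := by
  have F' := numSubtrees_glue (G := glue T x X a0) (w := .inl y) (X := Y) (a0 := b0)
  have F'' := numSubtrees_glue (G := glue T y X a0) (w := .inl x) (X := Y) (a0 := b0)
  have Fx := numSubtrees_glue (G := T) (w := x) (X := X) (a0 := a0)
  have Fy := numSubtrees_glue (G := T) (w := y) (X := X) (a0 := a0)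
  have fy := numSubtreesContaining_glue_inl (G := T) (w := x) (X := X) (a0 := a0) y
  have fx := numSubtreesContaining_glue_inl (G := T) (w := y) (X := X) (a0 := a0) x
  rw [numSubtreesContainingPair_comm] at fx
  have key : (numSubtrees (glue (glue T y X a0) (Sum.inl x) Y b0) : ℤ) -
      numSubtrees (glue (glue T x X a0) (Sum.inl y) Y b0) =
      ((numSubtreesContaining T x : ℤ) - numSubtreesContaining T y) *
        ((numSubtreesContaining Y b0 : ℤ) - numSubtreesContaining X a0) := by
    zify at F' F'' Fx Fy fx fy
    linear_combination F'' - F' + Fy - Fx +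
      ((numSubtreesContaining Y b0 : ℤ) - 1) * (fx - fy)
  have hpos : (0 : ℤ) < ((numSubtreesContaining T x : ℤ) - numSubtreesContaining T y) *
      ((numSubtreesContaining Y b0 : ℤ) - numSubtreesContaining X a0) :=
    mul_pos (by omega) (by omega)
  omega

/-- `T'` glues `X` at `x` and `Y` at `y`; `T''` glues `X` at `y` and `Y` at `x`.
If `f_T(x) > f_T(y)` and `f_X(a0) < f_Y(b0)` then `F(T'') > F(T')`. -/
theorem switch_subtrees_compare {V A B : Type*} [Fintype V] [Fintype A] [Fintype B]
    [DecidableEq A] [DecidableEq B]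
    (T : SimpleGraph V) (X : SimpleGraph A) (Y : SimpleGraph B) (a0 : A) (b0 : B)
    (hT : T.IsTree) (hX : X.IsTree) (hY : Y.IsTree)
    (x y : V) (hxy : x ≠ y)
    (hfT : numSubtreesContaining T y < numSubtreesContaining T x)
    (hfXY : numSubtreesContaining X a0 < numSubtreesContaining Y b0) :
    numSubtrees (glue (glue T x X a0) (Sum.inl y) Y b0) <
      numSubtrees (glue (glue T y X a0) (Sum.inl x) Y b0) :=
  switch_subtrees_compare_general T X Y a0 b0 x y hfT hfXY
end

section
/- Let P_{n-k}(a,b) be the tree obtained from a path on n-k vertices by attaching a pendant vertices to one endpoint and b pendant vertices to the other endpoint, where a + b = k and n - k ≥ 2. Then F(P_{n-k}(a,b)) = (2^a + 2^b)(n-k-1) + 2^k + k + C(n-k-1, 2). -/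
open SimpleGraph

/-- `P_m(a,b)`: the tree obtained from the path `v_0 v_1 ... v_{m-1}` by attaching `a`
pendant vertices to `v_0` and `b` pendant vertices to `v_{m-1}`. -/
def pathAB (m a b : ℕ) : SimpleGraph (Fin m ⊕ (Fin a ⊕ Fin b)) :=
  SimpleGraph.fromRel (fun p q =>
    match p, q with
    | Sum.inl i, Sum.inl j => (i : ℕ) + 1 = (j : ℕ)
    | Sum.inl i, Sum.inr (Sum.inl _) => (i : ℕ) = 0
    | Sum.inl i, Sum.inr (Sum.inr _) => (i : ℕ) = m - 1
    | _, _ => False)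

namespace PathABPf
variable {m a b : ℕ}

lemma adj_inl_inl {i j : Fin m} :
    (pathAB m a b).Adj (.inl i) (.inl j) ↔ ((i:ℕ)+1 = j ∨ (j:ℕ)+1 = i) := by
  rw [pathAB, fromRel_adj]
  constructor
  · rintro ⟨-, h⟩; exact h
  · intro h
    refine ⟨fun he => ?_, h⟩
    injection he with he'
    subst he'
    omega

lemma adj_inl_inrl {i : Fin m} {x : Fin a} :
    (pathAB m a b).Adj (.inl i) (.inr (.inl x)) ↔ (i:ℕ) = 0 := by
  rw [pathAB, fromRel_adj]
  constructor
  · rintro ⟨-, h | h⟩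
    · exact h
    · exact h.elim
  · intro h; exact ⟨by simp, Or.inl h⟩

lemma adj_inl_inrr {i : Fin m} {y : Fin b} :
    (pathAB m a b).Adj (.inl i) (.inr (.inr y)) ↔ (i:ℕ) = m - 1 := by
  rw [pathAB, fromRel_adj]
  constructor
  · rintro ⟨-, h | h⟩
    · exact h
    · exact h.elim
  · intro h; exact ⟨by simp, Or.inl h⟩

lemma not_adj_inr_inr {x y : Fin a ⊕ Fin b} :
    ¬ (pathAB m a b).Adj (.inr x) (.inr y) := by
  rw [pathAB, fromRel_adj]
  rintro ⟨-, h | h⟩ <;> exact h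


def Fset (m a b : ℕ) (i j : ℕ) (A : Set (Fin a)) (B : Set (Fin b)) :
    Set (Fin m ⊕ (Fin a ⊕ Fin b)) :=
  fun v => match v with
  | Sum.inl t => i ≤ (t:ℕ) ∧ (t:ℕ) ≤ j
  | Sum.inr (Sum.inl x) => x ∈ A
  | Sum.inr (Sum.inr y) => y ∈ B

lemma mem_fset_inl {i j A B} {t : Fin m} :
    (Sum.inl t ∈ Fset m a b i j A B) ↔ i ≤ (t:ℕ) ∧ (t:ℕ) ≤ j := Iff.rfl
lemma mem_fset_inrl {i j A B} {x : Fin a} :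
    (Sum.inr (Sum.inl x) ∈ Fset m a b i j A B) ↔ x ∈ A := Iff.rfl
lemma mem_fset_inrr {i j A B} {y : Fin b} :
    (Sum.inr (Sum.inr y) ∈ Fset m a b i j A B) ↔ y ∈ B := Iff.rfl
variable {m a b : ℕ}

lemma induce_adj' {S : Set (Fin m ⊕ (Fin a ⊕ Fin b))} {u v : S}
    (h : (pathAB m a b).Adj u.val v.val) : ((pathAB m a b).induce S).Adj u v := h

lemma fset_connected (hm : 2 ≤ m) (i j : ℕ) (hij : i ≤ j) (hj : j < m)
    (A : Set (Fin a)) (B : Set (Fin b))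
    (hA : A.Nonempty → i = 0) (hB : B.Nonempty → j = m - 1) :
    ((pathAB m a b).induce (Fset m a b i j A B)).Connected := by
  set S := Fset m a b i j A B with hS
  have hi : i < m := lt_of_le_of_lt hij hj
  have hv0 : (Sum.inl ⟨i, hi⟩ : Fin m ⊕ (Fin a ⊕ Fin b)) ∈ S := ⟨le_refl _, hij⟩
  set v0 : S := ⟨Sum.inl ⟨i, hi⟩, hv0⟩ with hv0def
  -- reach all path vertices between i and j
  have reach : ∀ t : ℕ, (hti : i ≤ t) → (htj : t ≤ j) →
      ((pathAB m a b).induce S).Reachable v0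
        ⟨Sum.inl ⟨t, lt_of_le_of_lt htj hj⟩, ⟨hti, htj⟩⟩ := by
    intro t hti htj
    induction t, hti using Nat.le_induction with
    | base => rfl
    | succ t ht ih =>
      have htj' : t ≤ j := le_of_lt htj
      refine (ih htj').trans (Adj.reachable (induce_adj' ?_))
      exact adj_inl_inl.mpr (Or.inl rfl)
  have key : ∀ v : S, ((pathAB m a b).induce S).Reachable v0 v := by
    rintro ⟨(t | x | y), hv⟩
    · have h1 : i ≤ (t:ℕ) := hv.1
      have h2 : (t:ℕ) ≤ j := hv.2
      have := reach t h1 h2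
      convert this using 2
    · have hi0 : i = 0 := hA ⟨x, hv⟩
      have h0 : ((i:ℕ) : ℕ) = 0 := hi0
      refine (reach i le_rfl hij).symm.symm.trans ?_
      have : v0 = ⟨Sum.inl ⟨i, hi⟩, hv0⟩ := rfl
      refine Reachable.trans (by rfl : ((pathAB m a b).induce S).Reachable v0 v0) ?_
      exact Adj.reachable (induce_adj' (adj_inl_inrl.mpr hi0))
    · have hjm : j = m - 1 := hB ⟨y, hv⟩
      refine (reach j hij le_rfl).trans ?_
      exact Adj.reachable (induce_adj' (adj_inl_inrr.mpr hjm))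
  rw [connected_iff]
  exact ⟨fun u v => (key u).symm.trans (key v), ⟨v0⟩⟩

lemma exists_neighbor {S : Set (Fin m ⊕ (Fin a ⊕ Fin b))}
    (hc : ((pathAB m a b).induce S).Connected) {u v : Fin m ⊕ (Fin a ⊕ Fin b)}
    (hu : u ∈ S) (hv : v ∈ S) (hne : u ≠ v) :
    ∃ w ∈ S, (pathAB m a b).Adj u w := by
  obtain ⟨W⟩ := hc.preconnected ⟨u, hu⟩ ⟨v, hv⟩
  obtain ⟨d, _, hf, hs⟩ := W.exists_boundary_dart {w : S | w.val = u} rfl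
    (fun h => hne h.symm)
  refine ⟨d.snd.val, d.snd.property, ?_⟩
  have hadj : (pathAB m a b).Adj d.fst.val d.snd.val := d.adj
  rwa [hf] at hadj

lemma interval_mem {S : Set (Fin m ⊕ (Fin a ⊕ Fin b))}
    (hc : ((pathAB m a b).induce S).Connected) {i0 j0 l : Fin m}
    (hi : Sum.inl i0 ∈ S) (hj : Sum.inl j0 ∈ S) (hil : i0 < l) (hlj : l < j0) :
    Sum.inl l ∈ S := by
  by_contra hl
  obtain ⟨W⟩ := hc.preconnected ⟨Sum.inl i0, hi⟩ ⟨Sum.inl j0, hj⟩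
  have hiln : (i0:ℕ) < (l:ℕ) := hil
  have hljn : (l:ℕ) < (j0:ℕ) := hlj
  have hjm : (j0:ℕ) < m := j0.isLt
  obtain ⟨d, _, hf, hs⟩ := W.exists_boundary_dart
    (fun w : S => match w.val with
      | Sum.inl t => (t : ℕ) < (l : ℕ)
      | Sum.inr (Sum.inl _) => True
      | Sum.inr (Sum.inr _) => False)
    hiln (by intro h; have hx : (j0:ℕ) < (l:ℕ) := h; omega)
  obtain ⟨⟨uf, us⟩, hadj'⟩ := d
  have hadj : (pathAB m a b).Adj uf.val us.val := hadj'
  obtain ⟨vf, hvf⟩ := uf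
  obtain ⟨vs, hvs⟩ := us
  rcases vf with tf | xf | yf <;> rcases vs with ts | xs | ys
  · -- inl inl
    have h1 : (tf:ℕ) < l := hf
    have h2 : ¬ (ts:ℕ) < l := hs
    rcases adj_inl_inl.mp hadj with h | h
    · have : (ts:ℕ) = (l:ℕ) := by omega
      exact hl (by rwa [show ts = l from Fin.ext this] at hvs)
    · omega
  · exact hs trivial
  · have := adj_inl_inrr.mp hadj
    have h1 : (tf:ℕ) < l := hf
    omega
  · -- inr inl -> inl: adjacency means ts = 0
    have h0 : (ts:ℕ) = 0 := adj_inl_inrl.mp hadj.symm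
    have h2 : ¬ (ts:ℕ) < l := hs
    omega
  · exact not_adj_inr_inr hadj
  · exact not_adj_inr_inr hadj
  · exact (hf : False)
  · exact (hf : False)
  · exact (hf : False)

lemma subtree_cases (hm : 2 ≤ m) {S : Set (Fin m ⊕ (Fin a ⊕ Fin b))}
    (hS : S.Nonempty) (hc : ((pathAB m a b).induce S).Connected) :
    (∃ x : Fin a ⊕ Fin b, S = {Sum.inr x}) ∨
    ∃ i j : ℕ, i ≤ j ∧ j < m ∧ ∃ A B, (A.Nonempty → i = 0) ∧ (B.Nonempty → j = m - 1) ∧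
      S = Fset m a b i j A B := by
  by_cases hP : ∃ t : Fin m, Sum.inl t ∈ S
  · right
    obtain ⟨i0, hi0, hmin⟩ := Set.exists_min_image {t : Fin m | Sum.inl t ∈ S} id
      (Set.toFinite _) (by obtain ⟨t, ht⟩ := hP; exact ⟨t, ht⟩)
    obtain ⟨j0, hj0, hmax⟩ := Set.exists_max_image {t : Fin m | Sum.inl t ∈ S} id
      (Set.toFinite _) (by obtain ⟨t, ht⟩ := hP; exact ⟨t, ht⟩)
    have hij : i0 ≤ j0 := hmin j0 hj0
    -- interval property
    have hint : ∀ t : Fin m, i0 ≤ t → t ≤ j0 → Sum.inl t ∈ S := by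
      intro t h1 h2
      rcases eq_or_lt_of_le h1 with rfl | h1'
      · exact hi0
      rcases eq_or_lt_of_le h2 with rfl | h2'
      · exact hj0
      exact interval_mem hc hi0 hj0 h1' h2'
    -- leaves force endpoints
    have hleft : ∀ x : Fin a, Sum.inr (Sum.inl x) ∈ S → (i0 : ℕ) = 0 := by
      intro x hx
      obtain ⟨w, hw, hadj⟩ := exists_neighbor hc hx hi0 (by simp)
      rcases w with t | x' | y'
      · have h0 : (t:ℕ) = 0 := adj_inl_inrl.mp hadj.symm
        have : i0 ≤ t := hmin t hw
        have : (i0:ℕ) ≤ (t:ℕ) := this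
        omega
      · exact (not_adj_inr_inr hadj).elim
      · exact (not_adj_inr_inr hadj).elim
    have hright : ∀ y : Fin b, Sum.inr (Sum.inr y) ∈ S → (j0 : ℕ) = m - 1 := by
      intro y hy
      obtain ⟨w, hw, hadj⟩ := exists_neighbor hc hy hj0 (by simp)
      rcases w with t | x' | y'
      · have h0 : (t:ℕ) = m - 1 := adj_inl_inrr.mp hadj.symm
        have : t ≤ j0 := hmax t hw
        have h1 : (t:ℕ) ≤ (j0:ℕ) := this
        have h2 : (j0:ℕ) < m := j0.isLt
        omega
      · exact (not_adj_inr_inr hadj).elim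
      · exact (not_adj_inr_inr hadj).elim
    refine ⟨(i0:ℕ), (j0:ℕ), hij, j0.isLt,
      {x | Sum.inr (Sum.inl x) ∈ S}, {y | Sum.inr (Sum.inr y) ∈ S},
      fun ⟨x, hx⟩ => hleft x hx, fun ⟨y, hy⟩ => hright y hy, ?_⟩
    ext v
    rcases v with t | x | y
    · rw [mem_fset_inl]
      constructor
      · intro ht; exact ⟨hmin t ht, hmax t ht⟩
      · rintro ⟨h1, h2⟩; exact hint t h1 h2
    · exact Iff.rfl
    · exact Iff.rfl
  · left
    obtain ⟨v, hv⟩ := hS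
    rcases v with t | x
    · exact absurd ⟨t, hv⟩ hP
    refine ⟨x, ?_⟩
    ext u
    simp only [Set.mem_singleton_iff]
    constructor
    · intro hu
      by_contra hne
      obtain ⟨w, hw, hadj⟩ := exists_neighbor hc hu hv hne
      rcases u with t | x'
      · exact hP ⟨t, hu⟩
      rcases w with t | x''
      · exact hP ⟨t, hw⟩
      · exact not_adj_inr_inr hadj
    · rintro rfl; exact hv

lemma fset_inj {i₁ j₁ i₂ j₂ : ℕ} {A₁ A₂ : Set (Fin a)} {B₁ B₂ : Set (Fin b)}
    (h1 : i₁ ≤ j₁) (hj1 : j₁ < m) (h2 : i₂ ≤ j₂) (hj2 : j₂ < m)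
    (h : Fset m a b i₁ j₁ A₁ B₁ = Fset m a b i₂ j₂ A₂ B₂) :
    i₁ = i₂ ∧ j₁ = j₂ ∧ A₁ = A₂ ∧ B₁ = B₂ := by
  have hmem : ∀ v, v ∈ Fset m a b i₁ j₁ A₁ B₁ ↔ v ∈ Fset m a b i₂ j₂ A₂ B₂ :=
    fun v => h ▸ Iff.rfl
  have e1 := (hmem (Sum.inl ⟨i₁, lt_of_le_of_lt h1 hj1⟩)).mp ⟨le_rfl, h1⟩
  have e2 := (hmem (Sum.inl ⟨i₂, lt_of_le_of_lt h2 hj2⟩)).mpr ⟨le_rfl, h2⟩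
  have e3 := (hmem (Sum.inl ⟨j₁, hj1⟩)).mp ⟨h1, le_rfl⟩
  have e4 := (hmem (Sum.inl ⟨j₂, hj2⟩)).mpr ⟨h2, le_rfl⟩
  simp only [mem_fset_inl, Fin.val_mk] at e1 e2 e3 e4
  refine ⟨by omega, by omega, ?_, ?_⟩
  · ext x; exact hmem (Sum.inr (Sum.inl x))
  · ext y; exact hmem (Sum.inr (Sum.inr y))

lemma singleton_connected (x : Fin a ⊕ Fin b) :
    ((pathAB m a b).induce {Sum.inr x}).Connected := by
  rw [connected_iff]
  refine ⟨fun u v => ?_, ⟨⟨Sum.inr x, rfl⟩⟩⟩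
  have : u = v := Subtype.ext (u.property.trans v.property.symm)
  rw [this]

def U1 (m a b : ℕ) : Set (Set (Fin m ⊕ (Fin a ⊕ Fin b))) :=
  (fun x : Fin a ⊕ Fin b => ({Sum.inr x} : Set _)) '' Set.univ

def s2 (m : ℕ) : Finset (Σ _ : ℕ, ℕ) :=
  (Finset.range (m-2)).sigma fun jp => Finset.range (jp+1)

def U2 (m a b : ℕ) : Set (Set (Fin m ⊕ (Fin a ⊕ Fin b))) :=
  (fun p : Σ _ : ℕ, ℕ => Fset m a b (p.2+1) (p.1+1) ∅ ∅) '' ↑(s2 m)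

def U3 (m a b : ℕ) : Set (Set (Fin m ⊕ (Fin a ⊕ Fin b))) :=
  (fun p : ℕ × Finset (Fin a) => Fset m a b 0 p.1 ↑p.2 ∅) ''
    ↑(Finset.range (m-1) ×ˢ (Finset.univ : Finset (Finset (Fin a))))

def U4 (m a b : ℕ) : Set (Set (Fin m ⊕ (Fin a ⊕ Fin b))) :=
  (fun p : ℕ × Finset (Fin b) => Fset m a b p.1 (m-1) ∅ ↑p.2) ''
    ↑(Finset.Ico 1 m ×ˢ (Finset.univ : Finset (Finset (Fin b))))

def U5 (m a b : ℕ) : Set (Set (Fin m ⊕ (Fin a ⊕ Fin b))) :=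
  (fun p : Finset (Fin a) × Finset (Fin b) => Fset m a b 0 (m-1) ↑p.1 ↑p.2) '' Set.univ

lemma card_s2 (hm : 2 ≤ m) : (s2 m).card = (m-1).choose 2 := by
  rw [s2, Finset.card_sigma]
  simp only [Finset.card_range]
  have key : ∀ N : ℕ, ∑ jp ∈ Finset.range N, (jp+1) = (N+1).choose 2 := by
    intro N
    induction N with
    | zero => simp
    | succ n ih =>
      rw [Finset.sum_range_succ, ih, Nat.choose_succ_succ' (n+1) 1, Nat.choose_one_right]
      have h2 : (1:ℕ)+1 = 2 := rfl
      rw [h2]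
      omega
  rw [key]
  have h22 : m - 2 + 1 = m - 1 := by omega
  rw [h22]

lemma ncard_U1 : (U1 m a b).ncard = a + b := by
  rw [U1, Set.ncard_image_of_injOn
    (fun x _ y _ h => Sum.inr_injective (Set.singleton_eq_singleton_iff.mp h))]
  simp [Set.ncard_univ]

lemma ncard_U2 (hm : 2 ≤ m) : (U2 m a b).ncard = (m-1).choose 2 := by
  rw [U2, Set.ncard_image_of_injOn, Set.ncard_coe_finset, card_s2 hm]
  rintro ⟨j1, i1⟩ hp ⟨j2, i2⟩ hq h
  simp only [Finset.mem_coe, s2, Finset.mem_sigma, Finset.mem_range] at hp hq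
  obtain ⟨hi, hj, -, -⟩ := fset_inj (m := m) (i₁ := i1+1) (j₁ := j1+1) (i₂ := i2+1) (j₂ := j2+1)
    (by omega) (by omega) (by omega) (by omega) h
  have e1 : j1 = j2 := by omega
  have e2 : i1 = i2 := by omega
  subst e1; subst e2; rfl

lemma ncard_U3 (hm : 2 ≤ m) : (U3 m a b).ncard = (m-1) * 2^a := by
  rw [U3, Set.ncard_image_of_injOn, Set.ncard_coe_finset, Finset.card_product,
    Finset.card_range, Finset.card_univ, Fintype.card_finset, Fintype.card_fin]
  rintro ⟨j1, A1⟩ hp ⟨j2, A2⟩ hq h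
  simp only [Finset.mem_coe, Finset.mem_product, Finset.mem_range] at hp hq
  obtain ⟨-, hj, hA, -⟩ := fset_inj (m := m) (i₁ := 0) (j₁ := j1) (i₂ := 0) (j₂ := j2)
    (by omega) (by omega) (by omega) (by omega) h
  simp only [Prod.mk.injEq]
  exact ⟨hj, Finset.coe_injective hA⟩

lemma ncard_U4 (hm : 2 ≤ m) : (U4 m a b).ncard = (m-1) * 2^b := by
  rw [U4, Set.ncard_image_of_injOn, Set.ncard_coe_finset, Finset.card_product,
    Nat.card_Ico, Finset.card_univ, Fintype.card_finset, Fintype.card_fin]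
  rintro ⟨i1, B1⟩ hp ⟨i2, B2⟩ hq h
  simp only [Finset.mem_coe, Finset.mem_product, Finset.mem_Ico] at hp hq
  obtain ⟨hi, -, -, hB⟩ := fset_inj (m := m) (i₁ := i1) (j₁ := m-1) (i₂ := i2) (j₂ := m-1)
    (by omega) (by omega) (by omega) (by omega) h
  simp only [Prod.mk.injEq]
  exact ⟨hi, Finset.coe_injective hB⟩

lemma ncard_U5 (hm : 2 ≤ m) : (U5 m a b).ncard = 2^a * 2^b := by
  rw [U5, Set.ncard_image_of_injOn]
  · rw [Set.ncard_univ, Nat.card_eq_fintype_card, Fintype.card_prod,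
      Fintype.card_finset, Fintype.card_finset, Fintype.card_fin, Fintype.card_fin]
  rintro ⟨A1, B1⟩ - ⟨A2, B2⟩ - h
  obtain ⟨-, -, hA, hB⟩ := fset_inj (m := m) (i₁ := 0) (j₁ := m-1) (i₂ := 0) (j₂ := m-1)
    (by omega) (by omega) (by omega) (by omega) h
  simp only [Prod.mk.injEq]
  exact ⟨Finset.coe_injective hA, Finset.coe_injective hB⟩

lemma U1_spec {S} (hS : S ∈ U1 m a b) : ∀ t : Fin m, Sum.inl t ∉ S := by
  obtain ⟨x, -, rfl⟩ := hS
  intro t h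
  simp at h

lemma U2_spec {S} (hS : S ∈ U2 m a b) (h0 : 0 < m) :
    (∃ t : Fin m, Sum.inl t ∈ S) ∧ Sum.inl (⟨0, h0⟩ : Fin m) ∉ S ∧
      Sum.inl (⟨m-1, by omega⟩ : Fin m) ∉ S := by
  obtain ⟨⟨jp, ip⟩, hmem, rfl⟩ := hS
  simp only [Finset.mem_coe, s2, Finset.mem_sigma, Finset.mem_range] at hmem
  refine ⟨⟨⟨ip+1, by omega⟩, by rw [mem_fset_inl]; simp only [Fin.val_mk]; omega⟩,
    fun h => ?_, fun h => ?_⟩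
  · rw [mem_fset_inl] at h
    simp only [Fin.val_mk] at h
    omega
  · rw [mem_fset_inl] at h
    simp only [Fin.val_mk] at h
    omega

lemma U3_spec {S} (hS : S ∈ U3 m a b) (h0 : 0 < m) (hm : 2 ≤ m) :
    Sum.inl (⟨0, h0⟩ : Fin m) ∈ S ∧ Sum.inl (⟨m-1, by omega⟩ : Fin m) ∉ S := by
  obtain ⟨⟨j, A⟩, hmem, rfl⟩ := hS
  simp only [Finset.mem_coe, Finset.mem_product, Finset.mem_range] at hmem
  refine ⟨by rw [mem_fset_inl]; simp only [Fin.val_mk]; omega, fun h => ?_⟩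
  rw [mem_fset_inl] at h
  simp only [Fin.val_mk] at h
  omega

lemma U4_spec {S} (hS : S ∈ U4 m a b) (h0 : 0 < m) :
    Sum.inl (⟨0, h0⟩ : Fin m) ∉ S ∧ Sum.inl (⟨m-1, by omega⟩ : Fin m) ∈ S := by
  obtain ⟨⟨i, B⟩, hmem, rfl⟩ := hS
  simp only [Finset.mem_coe, Finset.mem_product, Finset.mem_Ico] at hmem
  refine ⟨fun h => ?_, by rw [mem_fset_inl]; simp only [Fin.val_mk]; omega⟩
  rw [mem_fset_inl] at h
  simp only [Fin.val_mk] at h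
  omega

lemma U5_spec {S} (hS : S ∈ U5 m a b) (h0 : 0 < m) :
    Sum.inl (⟨0, h0⟩ : Fin m) ∈ S ∧ Sum.inl (⟨m-1, by omega⟩ : Fin m) ∈ S := by
  obtain ⟨⟨A, B⟩, -, rfl⟩ := hS
  exact ⟨by rw [mem_fset_inl]; simp only [Fin.val_mk]; omega,
    by rw [mem_fset_inl]; simp only [Fin.val_mk]; omega⟩

lemma cover (hm : 2 ≤ m) :
    {S : Set (Fin m ⊕ (Fin a ⊕ Fin b)) |
      S.Nonempty ∧ ((pathAB m a b).induce S).Connected} =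
    U1 m a b ∪ U2 m a b ∪ U3 m a b ∪ U4 m a b ∪ U5 m a b := by
  apply Set.eq_of_subset_of_subset
  · rintro S ⟨hne, hc⟩
    rcases subtree_cases hm hne hc with ⟨x, rfl⟩ | ⟨i, j, hij, hjm, A, B, hA, hB, rfl⟩
    · exact Or.inl (Or.inl (Or.inl (Or.inl ⟨x, Set.mem_univ x, rfl⟩)))
    · have hAfin := Set.toFinite A
      have hBfin := Set.toFinite B
      by_cases hi0 : i = 0
      · by_cases hjl : j = m - 1
        · refine Or.inr ⟨(hAfin.toFinset, hBfin.toFinset), Set.mem_univ _, ?_⟩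
          show Fset m a b 0 (m-1) ↑hAfin.toFinset ↑hBfin.toFinset = _
          rw [Set.Finite.coe_toFinset, Set.Finite.coe_toFinset, hi0, hjl]
        · have hBe : B = ∅ := Set.not_nonempty_iff_eq_empty.mp (fun h => hjl (hB h))
          refine Or.inl (Or.inl (Or.inr ⟨(j, hAfin.toFinset), ?_, ?_⟩))
          · rw [Finset.mem_coe, Finset.mem_product]
            exact ⟨Finset.mem_range.mpr (by omega), Finset.mem_univ _⟩
          · show Fset m a b 0 j ↑hAfin.toFinset ∅ = _
            rw [Set.Finite.coe_toFinset, hi0, hBe]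
      · have hAe : A = ∅ := Set.not_nonempty_iff_eq_empty.mp (fun h => hi0 (hA h))
        by_cases hjl : j = m - 1
        · refine Or.inl (Or.inr ⟨(i, hBfin.toFinset), ?_, ?_⟩)
          · rw [Finset.mem_coe, Finset.mem_product]
            exact ⟨Finset.mem_Ico.mpr ⟨by omega, by omega⟩, Finset.mem_univ _⟩
          · show Fset m a b i (m-1) ∅ ↑hBfin.toFinset = _
            rw [Set.Finite.coe_toFinset, hjl, hAe]
        · have hBe : B = ∅ := Set.not_nonempty_iff_eq_empty.mp (fun h => hjl (hB h))
          refine Or.inl (Or.inl (Or.inl (Or.inr ⟨⟨j-1, i-1⟩, ?_, ?_⟩)))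
          · rw [Finset.mem_coe, s2, Finset.mem_sigma]
            exact ⟨Finset.mem_range.mpr (show j-1 < m-2 by omega),
              Finset.mem_range.mpr (show i-1 < j-1+1 by omega)⟩
          · show Fset m a b (i-1+1) (j-1+1) ∅ ∅ = _
            rw [show i-1+1 = i by omega, show j-1+1 = j by omega, hAe, hBe]
  · rintro S ((((⟨x, -, rfl⟩ | ⟨⟨jp, ip⟩, hmem, rfl⟩) | ⟨⟨j, A⟩, hmem, rfl⟩) |
      ⟨⟨i, B⟩, hmem, rfl⟩) | ⟨⟨A, B⟩, -, rfl⟩)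
    · exact ⟨⟨Sum.inr x, rfl⟩, singleton_connected x⟩
    · simp only [Finset.mem_coe, s2, Finset.mem_sigma, Finset.mem_range] at hmem
      refine ⟨⟨Sum.inl ⟨ip+1, by omega⟩,
        by rw [mem_fset_inl]; simp only [Fin.val_mk]; omega⟩, ?_⟩
      exact fset_connected hm (ip+1) (jp+1) (by omega) (by omega) ∅ ∅
        (fun h => absurd h (by simp)) (fun h => absurd h (by simp))
    · simp only [Finset.mem_coe, Finset.mem_product, Finset.mem_range] at hmem
      refine ⟨⟨Sum.inl ⟨0, by omega⟩,
        by rw [mem_fset_inl]; simp only [Fin.val_mk]; omega⟩, ?_⟩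
      exact fset_connected hm 0 j (by omega) (by omega) _ ∅
        (fun _ => rfl) (fun h => absurd h (by simp))
    · simp only [Finset.mem_coe, Finset.mem_product, Finset.mem_Ico] at hmem
      refine ⟨⟨Sum.inl ⟨i, by omega⟩,
        by rw [mem_fset_inl]; simp only [Fin.val_mk]; omega⟩, ?_⟩
      exact fset_connected hm i (m-1) (by omega) (by omega) ∅ _
        (fun h => absurd h (by simp)) (fun _ => rfl)
    · refine ⟨⟨Sum.inl ⟨0, by omega⟩,
        by rw [mem_fset_inl]; simp only [Fin.val_mk]; omega⟩, ?_⟩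
      exact fset_connected hm 0 (m-1) (by omega) (by omega) _ _
        (fun _ => rfl) (fun _ => rfl)

lemma main_count (hm : 2 ≤ m) :
    {S : Set (Fin m ⊕ (Fin a ⊕ Fin b)) |
      S.Nonempty ∧ ((pathAB m a b).induce S).Connected}.ncard
      = (2^a + 2^b) * (m-1) + 2^(a+b) + (a+b) + (m-1).choose 2 := by
  have h0 : 0 < m := by omega
  have d12 : Disjoint (U1 m a b) (U2 m a b) := by
    rw [Set.disjoint_left]; intro S h1 h2
    obtain ⟨t, ht⟩ := (U2_spec h2 h0).1
    exact U1_spec h1 t ht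
  have d13 : Disjoint (U1 m a b) (U3 m a b) := by
    rw [Set.disjoint_left]; intro S h1 h3
    exact U1_spec h1 _ (U3_spec h3 h0 hm).1
  have d14 : Disjoint (U1 m a b) (U4 m a b) := by
    rw [Set.disjoint_left]; intro S h1 h4
    exact U1_spec h1 _ (U4_spec h4 h0).2
  have d15 : Disjoint (U1 m a b) (U5 m a b) := by
    rw [Set.disjoint_left]; intro S h1 h5
    exact U1_spec h1 _ (U5_spec h5 h0).1
  have d23 : Disjoint (U2 m a b) (U3 m a b) := by
    rw [Set.disjoint_left]; intro S h2 h3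
    exact (U2_spec h2 h0).2.1 (U3_spec h3 h0 hm).1
  have d24 : Disjoint (U2 m a b) (U4 m a b) := by
    rw [Set.disjoint_left]; intro S h2 h4
    exact (U2_spec h2 h0).2.2 (U4_spec h4 h0).2
  have d25 : Disjoint (U2 m a b) (U5 m a b) := by
    rw [Set.disjoint_left]; intro S h2 h5
    exact (U2_spec h2 h0).2.1 (U5_spec h5 h0).1
  have d34 : Disjoint (U3 m a b) (U4 m a b) := by
    rw [Set.disjoint_left]; intro S h3 h4
    exact (U4_spec h4 h0).1 (U3_spec h3 h0 hm).1
  have d35 : Disjoint (U3 m a b) (U5 m a b) := by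
    rw [Set.disjoint_left]; intro S h3 h5
    exact (U3_spec h3 h0 hm).2 (U5_spec h5 h0).2
  have d45 : Disjoint (U4 m a b) (U5 m a b) := by
    rw [Set.disjoint_left]; intro S h4 h5
    exact (U4_spec h4 h0).1 (U5_spec h5 h0).1
  rw [cover hm,
    Set.ncard_union_eq (Set.disjoint_union_left.mpr
      ⟨Set.disjoint_union_left.mpr ⟨Set.disjoint_union_left.mpr ⟨d15, d25⟩, d35⟩, d45⟩)
      (Set.toFinite _) (Set.toFinite _),
    Set.ncard_union_eq (Set.disjoint_union_left.mpr
      ⟨Set.disjoint_union_left.mpr ⟨d14, d24⟩, d34⟩) (Set.toFinite _) (Set.toFinite _),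
    Set.ncard_union_eq (Set.disjoint_union_left.mpr ⟨d13, d23⟩)
      (Set.toFinite _) (Set.toFinite _),
    Set.ncard_union_eq d12 (Set.toFinite _) (Set.toFinite _),
    ncard_U1, ncard_U2 hm, ncard_U3 hm, ncard_U4 hm, ncard_U5 hm, pow_add]
  ring

end PathABPf

theorem numSubtrees_pathAB (n k a b : ℕ) (hab : a + b = k) (hm : 2 ≤ n - k) :
    numSubtrees (pathAB (n - k) a b) =
      (2 ^ a + 2 ^ b) * (n - k - 1) + 2 ^ k + k + (n - k - 1).choose 2 := by
  subst hab
  rw [numSubtrees, PathABPf.main_count hm]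
end

section
/- Let D(p,q) be the double star with p + q = n vertices: two adjacent centers u, v with u having p-1 pendant neighbors and v having q-1 pendant neighbors. Then F(D(p,q)) = 2^{n-2} + 2^{p-1} + 2^{q-1} + n - 2. -/
open SimpleGraph

/-- The double star `D(p,q)` on `p + q` vertices: the center `Sum.inl 0` is adjacent to the
`p - 1` leaves `Sum.inl i` (`i ≠ 0`) and to the center `Sum.inr 0`, which is adjacent to
the `q - 1` leaves `Sum.inr j` (`j ≠ 0`). -/
def doubleStar (p q : ℕ) : SimpleGraph (Fin p ⊕ Fin q) :=
  SimpleGraph.fromRel (fun x y =>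
    match x, y with
    | Sum.inl i, Sum.inl _ => (i : ℕ) = 0
    | Sum.inr i, Sum.inr _ => (i : ℕ) = 0
    | Sum.inl i, Sum.inr j => (i : ℕ) = 0 ∧ (j : ℕ) = 0
    | Sum.inr _, Sum.inl _ => False)


/-!
Sort the subtrees `S` of `D(p,q)` by the centres `u = .inl 0`, `v = .inr 0` they contain.
If `u, v ∈ S`, then `S` is connected: it is a star around `u` and a star around `v` joined by
the edge `uv`; this gives `2 ^ (n - 2)` subtrees. If `u ∈ S` but `v ∉ S`, a leaf of `v` in `S`
would have no neighbour in `S`, so `S` lies on the side of `u` and is a star around `u`; this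
gives `2 ^ (p - 1)` subtrees, and symmetrically `2 ^ (q - 1)` with `v` alone. If neither centre
is in `S`, no vertex of `S` has a neighbour in `S`, so `S` is one of the `n - 2` leaves.
-/

open Finset

namespace SimpleGraph

variable {V : Type*} {G : SimpleGraph V} {S : Set V}

lemma induce_connected_of_forall_adj {c : V} (hc : c ∈ S)
    (hadj : ∀ x ∈ S, x ≠ c → G.Adj c x) : (G.induce S).Connected := by
  refine (connected_iff_exists_forall_reachable _).2 ⟨⟨c, hc⟩, fun ⟨x, hx⟩ => ?_⟩
  by_cases hxc : x = c
  · subst hxc; rfl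
  · exact Adj.reachable (by simpa using hadj x hx hxc)

lemma eq_singleton_of_induce_connected {x : V} (hconn : (G.induce S).Connected) (hx : x ∈ S)
    (hnadj : ∀ y ∈ S, ¬G.Adj x y) : S = {x} := by
  by_contra hS
  have : Nontrivial S := Set.nontrivial_coe_sort.2 <| (Set.nontrivial_iff_ne_singleton hx).2 hS
  obtain ⟨⟨y, hy⟩, hxy⟩ := hconn.preconnected.exists_adj_of_nontrivial ⟨x, hx⟩
  exact hnadj y hy (by simpa using hxy)

lemma numSubtrees_eq_card [Fintype V] (T : Finset (Finset V))
    (hT : ∀ S : Finset V, S ∈ T ↔ S.Nonempty ∧ (G.induce (S : Set V)).Connected) :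
    numSubtrees G = #T := by
  rw [numSubtrees, ← Set.ncard_coe_finset T,
    ← Set.ncard_image_of_injective _ Finset.coe_injective]
  congr 1
  ext S
  obtain ⟨S, rfl⟩ := S.toFinite.exists_finset_coe
  simp [hT]

end SimpleGraph

namespace doubleStar

variable {p q : ℕ} [NeZero p] [NeZero q] {S : Set (Fin p ⊕ Fin q)}

lemma adj_inl_zero_inr_zero : (doubleStar p q).Adj (.inl 0) (.inr 0) := by
  simp [doubleStar]

lemma adj_inl_zero {i : Fin p} (hi : i ≠ 0) : (doubleStar p q).Adj (.inl 0) (.inl i) := by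
  simp [doubleStar, Ne.symm hi]

lemma adj_inr_zero {j : Fin q} (hj : j ≠ 0) : (doubleStar p q).Adj (.inr 0) (.inr j) := by
  simp [doubleStar, Ne.symm hj]

lemma eq_of_adj_inl {i : Fin p} {y : Fin p ⊕ Fin q} (hi : i ≠ 0)
    (h : (doubleStar p q).Adj (.inl i) y) : y = .inl 0 := by
  rcases y with k | k <;> simp_all [doubleStar, Fin.val_eq_zero_iff]

lemma eq_of_adj_inr {j : Fin q} {y : Fin p ⊕ Fin q} (hj : j ≠ 0)
    (h : (doubleStar p q).Adj (.inr j) y) : y = .inr 0 := by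
  rcases y with k | k <;> simp_all [doubleStar, Fin.val_eq_zero_iff]


lemma eq_singleton_of_inl_mem {i : Fin p} (hconn : ((doubleStar p q).induce S).Connected)
    (hi : .inl i ∈ S) (hu : .inl 0 ∉ S) : S = {.inl i} :=
  eq_singleton_of_induce_connected hconn hi fun y hy hadj =>
    hu (eq_of_adj_inl (by rintro rfl; exact hu hi) hadj ▸ hy)

lemma eq_singleton_of_inr_mem {j : Fin q} (hconn : ((doubleStar p q).induce S).Connected)
    (hj : .inr j ∈ S) (hv : .inr 0 ∉ S) : S = {.inr j} :=
  eq_singleton_of_induce_connected hconn hj fun y hy hadj =>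
    hv (eq_of_adj_inr (by rintro rfl; exact hv hj) hadj ▸ hy)

lemma induce_inter_range_inl_connected (hu : .inl 0 ∈ S) :
    ((doubleStar p q).induce (S ∩ Set.range .inl)).Connected := by
  refine induce_connected_of_forall_adj ⟨hu, Set.mem_range_self 0⟩ ?_
  rintro _ ⟨-, i, rfl⟩ hi
  exact adj_inl_zero (by rintro rfl; exact hi rfl)

lemma induce_inter_range_inr_connected (hv : .inr 0 ∈ S) :
    ((doubleStar p q).induce (S ∩ Set.range .inr)).Connected := by
  refine induce_connected_of_forall_adj ⟨hv, Set.mem_range_self 0⟩ ?_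
  rintro _ ⟨-, j, rfl⟩ hj
  exact adj_inr_zero (by rintro rfl; exact hj rfl)

lemma induce_connected_of_inl_zero_mem_of_inr_zero_mem (hu : .inl 0 ∈ S) (hv : .inr 0 ∈ S) :
    ((doubleStar p q).induce S).Connected := by
  have hsplit : S = (S ∩ Set.range .inl) ∪ (S ∩ Set.range .inr) := by
    rw [← Set.inter_union_distrib_left, Set.range_inl_union_range_inr, Set.inter_univ]
  rw [hsplit]
  exact connected_induce_union (induce_inter_range_inl_connected hu).preconnected
    (induce_inter_range_inr_connected hv).preconnected ⟨hu, Set.mem_range_self 0⟩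
    ⟨hv, Set.mem_range_self 0⟩ adj_inl_zero_inr_zero


def subtrees (p q : ℕ) [NeZero p] [NeZero q] : Finset (Finset (Fin p ⊕ Fin q)) :=
  Icc {.inl 0, .inr 0} univ ∪ Icc {.inl 0} (univ.map .inl) ∪ Icc {.inr 0} (univ.map .inr) ∪
    ({.inl 0, .inr 0}ᶜ : Finset (Fin p ⊕ Fin q)).map ⟨({·}), singleton_injective⟩

lemma mem_subtrees_iff (S : Finset (Fin p ⊕ Fin q)) :
    S ∈ subtrees p q ↔
      S.Nonempty ∧ ((doubleStar p q).induce (S : Set (Fin p ⊕ Fin q))).Connected := by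
  simp only [subtrees, mem_union, mem_Icc, mem_map, Function.Embedding.coeFn_mk,
    insert_subset_iff, singleton_subset_iff, subset_univ, and_true, mem_compl, mem_insert,
    mem_singleton, not_or]
  constructor
  · rintro (((⟨hu, hv⟩ | ⟨hu, hL⟩) | ⟨hv, hR⟩) | ⟨x, -, rfl⟩)
    · exact ⟨⟨_, hu⟩, induce_connected_of_inl_zero_mem_of_inr_zero_mem hu hv⟩
    · have hL : (S : Set (Fin p ⊕ Fin q)) ⊆ Set.range .inl := by simpa using coe_subset.2 hL
      exact ⟨⟨_, hu⟩, Set.inter_eq_left.2 hL ▸ induce_inter_range_inl_connected hu⟩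
    · have hR : (S : Set (Fin p ⊕ Fin q)) ⊆ Set.range .inr := by simpa using coe_subset.2 hR
      exact ⟨⟨_, hv⟩, Set.inter_eq_left.2 hR ▸ induce_inter_range_inr_connected hv⟩
    · refine ⟨singleton_nonempty x, ?_⟩
      rw [coe_singleton]
      exact induce_connected_of_forall_adj (Set.mem_singleton x) (by simp)
  · rintro ⟨⟨x, hx⟩, hconn⟩
    by_cases hu : .inl 0 ∈ S <;> by_cases hv : .inr 0 ∈ S
    · exact .inl (.inl (.inl ⟨hu, hv⟩))
    · refine .inl (.inl (.inr ⟨hu, fun y hy => ?_⟩))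
      rcases y with i | j
      · simp
      · have := eq_singleton_of_inr_mem hconn (mem_coe.2 hy) hv
        simpa [this] using mem_coe.2 hu
    · refine .inl (.inr ⟨hv, fun y hy => ?_⟩)
      rcases y with i | j
      · have := eq_singleton_of_inl_mem hconn (mem_coe.2 hy) hu
        simpa [this] using mem_coe.2 hv
      · simp
    · refine .inr ⟨x, ⟨fun h => hu (h ▸ hx), fun h => hv (h ▸ hx)⟩, ?_⟩
      rcases x with i | j
      · exact (coe_eq_singleton.1 (eq_singleton_of_inl_mem hconn hx hu)).symm
      · exact (coe_eq_singleton.1 (eq_singleton_of_inr_mem hconn hx hv)).symm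

lemma card_subtrees :
    #(subtrees p q) = 2 ^ (p + q - 2) + 2 ^ (p - 1) + 2 ^ (q - 1) + (p + q - 2) := by
  have hne : (.inl 0 : Fin p ⊕ Fin q) ≠ .inr 0 := Sum.inl_ne_inr
  rw [subtrees, card_union_of_disjoint, card_union_of_disjoint, card_union_of_disjoint,
    card_Icc_finset (subset_univ _), card_Icc_finset (by simp), card_Icc_finset (by simp),
    card_map]
  · simp [card_compl, card_pair hne, Nat.sub_sub]
  all_goals simp only [Finset.disjoint_left, mem_union, mem_Icc, mem_map, subset_iff]; aesop

end doubleStar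

theorem numSubtrees_doubleStar (p q n : ℕ) (hp : 1 ≤ p) (hq : 1 ≤ q) (hn : p + q = n) :
    numSubtrees (doubleStar p q) = 2 ^ (n - 2) + 2 ^ (p - 1) + 2 ^ (q - 1) + n - 2 := by
  subst hn
  have : NeZero p := ⟨by omega⟩
  have : NeZero q := ⟨by omega⟩
  rw [numSubtrees_eq_card _ doubleStar.mem_subtrees_iff, doubleStar.card_subtrees,
    Nat.add_sub_assoc (by omega : 2 ≤ p + q)]
end

section
/- For q ≥ p ≥ 1 with p + q = n fixed, F(D(p,q)) < F(D(p-1, q+1)) whenever p > 1; consequently F(D(p,q)) < F(K_{1,n-1}) for all q ≥ p > 1. -/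
open SimpleGraph

namespace DSproof

variable {p q : ℕ}

lemma adj_inl (hp : 0 < p) (i : Fin p) (hi : (i : ℕ) ≠ 0) :
    (doubleStar p q).Adj (Sum.inl i) (Sum.inl ⟨0, hp⟩) := by
  refine ⟨?_, Or.inr rfl⟩
  simp only [ne_eq, Sum.inl.injEq, Fin.ext_iff]
  simpa using hi

lemma adj_ab (hp : 0 < p) (hq : 0 < q) :
    (doubleStar p q).Adj (Sum.inl (⟨0, hp⟩ : Fin p)) (Sum.inr (⟨0, hq⟩ : Fin q)) := by
  exact ⟨by simp, Or.inl ⟨rfl, rfl⟩⟩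

lemma adj_inr (hq : 0 < q) (j : Fin q) (hj : (j : ℕ) ≠ 0) :
    (doubleStar p q).Adj (Sum.inr j : Fin p ⊕ Fin q) (Sum.inr ⟨0, hq⟩) := by
  refine ⟨?_, Or.inr rfl⟩
  simp only [ne_eq, Sum.inr.injEq, Fin.ext_iff]
  simpa using hj

lemma adj_inl_eq (hp : 0 < p) (i : Fin p) (hi : (i : ℕ) ≠ 0) {y : Fin p ⊕ Fin q}
    (h : (doubleStar p q).Adj (Sum.inl i) y) : y = Sum.inl ⟨0, hp⟩ := by
  obtain ⟨hne, h | h⟩ := h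
  · rcases y with j | j
    · exact absurd h hi
    · exact absurd h.1 hi
  · rcases y with j | j
    · have : (j : ℕ) = 0 := h
      simp [Fin.ext_iff, this]
    · exact absurd h (by exact id)

lemma adj_inr_eq (hq : 0 < q) (j : Fin q) (hj : (j : ℕ) ≠ 0) {y : Fin p ⊕ Fin q}
    (h : (doubleStar p q).Adj (Sum.inr j) y) : y = Sum.inr ⟨0, hq⟩ := by
  obtain ⟨hne, h | h⟩ := h
  · rcases y with i | i
    · exact absurd h (by exact id)
    · exact absurd h hj
  · rcases y with i | i
    · exact absurd h.2 hj
    · have : (i : ℕ) = 0 := h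
      simp [Fin.ext_iff, this]

lemma reach_eq {W : Type*} {G : SimpleGraph W} {S : Set W} {x : W} (hx : x ∈ S)
    (h : ∀ y ∈ S, ¬ G.Adj x y) {u : S} (hr : (G.induce S).Reachable ⟨x, hx⟩ u) :
    u = ⟨x, hx⟩ := by
  obtain ⟨w⟩ := hr
  cases w with
  | nil => rfl
  | @cons _ v _ ha _ =>
    exact absurd (ha : G.Adj x v.1) (h v.1 v.2)

lemma subtree_eq (hp : 0 < p) (hq : 0 < q) :
    {S : Set (Fin p ⊕ Fin q) | S.Nonempty ∧ ((doubleStar p q).induce S).Connected} =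
      {S : Set (Fin p ⊕ Fin q) | Sum.inl ⟨0, hp⟩ ∈ S ∧ Sum.inr ⟨0, hq⟩ ∈ S}
      ∪ {S : Set (Fin p ⊕ Fin q) | Sum.inl ⟨0, hp⟩ ∈ S ∧ ∀ j : Fin q, Sum.inr j ∉ S}
      ∪ {S : Set (Fin p ⊕ Fin q) | Sum.inr ⟨0, hq⟩ ∈ S ∧ ∀ i : Fin p, Sum.inl i ∉ S}
      ∪ {S : Set (Fin p ⊕ Fin q) | Sum.inl ⟨0, hp⟩ ∉ S ∧ Sum.inr ⟨0, hq⟩ ∉ S ∧ ∃ x, S = {x}} := by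
  ext S
  simp only [Set.mem_setOf_eq, Set.mem_union]
  constructor
  · rintro ⟨hne, hconn⟩
    by_cases ha : Sum.inl (⟨0, hp⟩ : Fin p) ∈ S <;> by_cases hb : Sum.inr (⟨0, hq⟩ : Fin q) ∈ S
    · exact Or.inl (Or.inl (Or.inl ⟨ha, hb⟩))
    · refine Or.inl (Or.inl (Or.inr ⟨ha, fun j hj => ?_⟩))
      have hj0 : (j : ℕ) ≠ 0 := fun h0 => hb ((Fin.ext h0 : j = ⟨0, hq⟩) ▸ hj)
      have hiso : ∀ y ∈ S, ¬ (doubleStar p q).Adj (Sum.inr j) y := fun y hy hadj =>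
        hb (adj_inr_eq hq j hj0 hadj ▸ hy)
      have heq := reach_eq hj hiso (hconn.preconnected ⟨_, hj⟩ ⟨_, ha⟩)
      exact absurd (congrArg Subtype.val heq) (by simp)
    · refine Or.inl (Or.inr ⟨hb, fun i hi => ?_⟩)
      have hi0 : (i : ℕ) ≠ 0 := fun h0 => ha ((Fin.ext h0 : i = ⟨0, hp⟩) ▸ hi)
      have hiso : ∀ y ∈ S, ¬ (doubleStar p q).Adj (Sum.inl i) y := fun y hy hadj =>
        ha (adj_inl_eq hp i hi0 hadj ▸ hy)
      have heq := reach_eq hi hiso (hconn.preconnected ⟨_, hi⟩ ⟨_, hb⟩)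
      exact absurd (congrArg Subtype.val heq) (by simp)
    · refine Or.inr ⟨ha, hb, ?_⟩
      obtain ⟨x, hx⟩ := hne
      refine ⟨x, Set.eq_singleton_iff_unique_mem.mpr ⟨hx, fun y hy => ?_⟩⟩
      have hiso : ∀ z ∈ S, ¬ (doubleStar p q).Adj x z := by
        intro z hz hadj
        rcases x with i | j
        · have hi0 : (i : ℕ) ≠ 0 := fun h0 => ha ((Fin.ext h0 : i = ⟨0, hp⟩) ▸ hx)
          exact ha (adj_inl_eq hp i hi0 hadj ▸ hz)
        · have hj0 : (j : ℕ) ≠ 0 := fun h0 => hb ((Fin.ext h0 : j = ⟨0, hq⟩) ▸ hx)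
          exact hb (adj_inr_eq hq j hj0 hadj ▸ hz)
      have heq := reach_eq hx hiso (hconn.preconnected ⟨x, hx⟩ ⟨y, hy⟩)
      exact congrArg Subtype.val heq
  · intro h
    have hreach_a : ∀ (ha : Sum.inl (⟨0, hp⟩ : Fin p) ∈ S)
        (hbs : ∀ j : Fin q, Sum.inr j ∈ S → Sum.inr (⟨0, hq⟩ : Fin q) ∈ S)
        (u : S), ((doubleStar p q).induce S).Reachable u ⟨_, ha⟩ := by
      intro ha hbs u
      obtain ⟨x, hx⟩ := u
      rcases x with i | j
      · by_cases h0 : (i : ℕ) = 0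
        · have : (⟨Sum.inl i, hx⟩ : S) = ⟨Sum.inl ⟨0, hp⟩, ha⟩ :=
            Subtype.ext (by simp [Fin.ext_iff, h0])
          rw [this]
        · exact Adj.reachable (adj_inl hp i h0 : (doubleStar p q).Adj _ _)
      · have hb : Sum.inr (⟨0, hq⟩ : Fin q) ∈ S := hbs j hx
        by_cases h0 : (j : ℕ) = 0
        · have : (⟨Sum.inr j, hx⟩ : S) = ⟨Sum.inr ⟨0, hq⟩, hb⟩ :=
            Subtype.ext (by simp [Fin.ext_iff, h0])
          rw [this]
          exact Adj.reachable ((adj_ab hp hq).symm : (doubleStar p q).Adj _ _)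
        · refine (Adj.reachable (show ((doubleStar p q).induce S).Adj ⟨Sum.inr j, hx⟩
              ⟨Sum.inr ⟨0, hq⟩, hb⟩ from adj_inr hq j h0)).trans ?_
          exact Adj.reachable (show ((doubleStar p q).induce S).Adj ⟨Sum.inr ⟨0, hq⟩, hb⟩
              ⟨Sum.inl ⟨0, hp⟩, ha⟩ from (adj_ab hp hq).symm)
    rcases h with ((⟨ha, hb⟩ | ⟨ha, hb⟩) | ⟨hb, ha⟩) | ⟨ha, hb, x, rfl⟩
    · refine ⟨⟨_, ha⟩, (connected_iff _).mpr ⟨fun u v => ?_, ⟨⟨_, ha⟩⟩⟩⟩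
      have r := hreach_a ha (fun j _ => hb)
      exact (r u).trans (r v).symm
    · refine ⟨⟨_, ha⟩, (connected_iff _).mpr ⟨fun u v => ?_, ⟨⟨_, ha⟩⟩⟩⟩
      have r := hreach_a ha (fun j hj => absurd hj (hb j))
      exact (r u).trans (r v).symm
    · -- symmetric: b ∈ S, no inl in S
      have hreach_b : ∀ u : S, ((doubleStar p q).induce S).Reachable u ⟨_, hb⟩ := by
        intro u
        obtain ⟨x, hx⟩ := u
        rcases x with i | j
        · exact absurd hx (ha i)
        · by_cases h0 : (j : ℕ) = 0
          · have : (⟨Sum.inr j, hx⟩ : S) = ⟨Sum.inr ⟨0, hq⟩, hb⟩ :=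
              Subtype.ext (by simp [Fin.ext_iff, h0])
            rw [this]
          · exact Adj.reachable (adj_inr hq j h0 : (doubleStar p q).Adj _ _)
      refine ⟨⟨_, hb⟩, (connected_iff _).mpr ⟨fun u v => ?_, ⟨⟨_, hb⟩⟩⟩⟩
      exact (hreach_b u).trans (hreach_b v).symm
    · refine ⟨⟨x, rfl⟩, (connected_iff _).mpr ⟨fun u v => ?_, ⟨⟨x, rfl⟩⟩⟩⟩
      have : u = v := Subtype.ext (by rw [u.2, v.2])
      rw [this]


def side {n : ℕ} (A : Set {i : Fin n // (i : ℕ) ≠ 0}) (i : Fin n) : Prop :=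
  (i : ℕ) = 0 ∨ ∃ h : (i : ℕ) ≠ 0, (⟨i, h⟩ : {i : Fin n // (i : ℕ) ≠ 0}) ∈ A

lemma side_iff {n : ℕ} (A : Set {i : Fin n // (i : ℕ) ≠ 0}) (i : {i : Fin n // (i : ℕ) ≠ 0}) :
    side A i.1 ↔ i ∈ A := by
  obtain ⟨i, hi⟩ := i
  constructor
  · rintro (h0 | ⟨h, hA⟩)
    · exact absurd h0 hi
    · exact hA
  · intro h
    exact Or.inr ⟨hi, h⟩

lemma side_mem {n : ℕ} (A : Set {i : Fin n // (i : ℕ) ≠ 0}) {S : Set (Fin n)}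
    (hmem : ∀ i : Fin n, (i : ℕ) = 0 → i ∈ S) (hA : A = {i | i.1 ∈ S}) (i : Fin n) :
    side A i ↔ i ∈ S := by
  subst hA
  constructor
  · rintro (h0 | ⟨h, hA⟩)
    · exact hmem i h0
    · exact hA
  · intro h
    by_cases h0 : (i : ℕ) = 0
    · exact Or.inl h0
    · exact Or.inr ⟨h0, h⟩

def mk1 (p q : ℕ) (A : Set {i : Fin p // (i : ℕ) ≠ 0}) (B : Set {j : Fin q // (j : ℕ) ≠ 0}) :
    Set (Fin p ⊕ Fin q) := {x | Sum.elim (side A) (side B) x}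

def mk2 (p q : ℕ) (A : Set {i : Fin p // (i : ℕ) ≠ 0}) : Set (Fin p ⊕ Fin q) :=
  {x | Sum.elim (side A) (fun _ => False) x}

def mk3 (p q : ℕ) (B : Set {j : Fin q // (j : ℕ) ≠ 0}) : Set (Fin p ⊕ Fin q) :=
  {x | Sum.elim (fun _ => False) (side B) x}

noncomputable def e1 (hp : 0 < p) (hq : 0 < q) :
    ↥{S : Set (Fin p ⊕ Fin q) | Sum.inl ⟨0, hp⟩ ∈ S ∧ Sum.inr ⟨0, hq⟩ ∈ S} ≃
      Set {i : Fin p // (i : ℕ) ≠ 0} × Set {j : Fin q // (j : ℕ) ≠ 0} where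
  toFun S := ({i | Sum.inl i.1 ∈ S.1}, {j | Sum.inr j.1 ∈ S.1})
  invFun P := ⟨mk1 p q P.1 P.2, Or.inl rfl, Or.inl rfl⟩
  left_inv S := by
    apply Subtype.ext
    ext x
    rcases x with i | j
    · show side _ i ↔ _
      refine side_mem (S := {x : Fin p | Sum.inl x ∈ S.1}) _ (fun i h0 => ?_) rfl i
      have : i = ⟨0, hp⟩ := Fin.ext h0
      rw [this]; exact S.2.1
    · show side _ j ↔ _
      refine side_mem (S := {x : Fin q | Sum.inr x ∈ S.1}) _ (fun j h0 => ?_) rfl j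
      have : j = ⟨0, hq⟩ := Fin.ext h0
      rw [this]; exact S.2.2
  right_inv P := by
    obtain ⟨A, B⟩ := P
    refine Prod.ext ?_ ?_ <;> · ext i; exact side_iff _ i

noncomputable def e2 (hp : 0 < p) (q : ℕ) :
    ↥{S : Set (Fin p ⊕ Fin q) | Sum.inl ⟨0, hp⟩ ∈ S ∧ ∀ j : Fin q, Sum.inr j ∉ S} ≃
      Set {i : Fin p // (i : ℕ) ≠ 0} where
  toFun S := {i | Sum.inl i.1 ∈ S.1}
  invFun A := ⟨mk2 p q A, Or.inl rfl, fun j hj => hj⟩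
  left_inv S := by
    apply Subtype.ext
    ext x
    rcases x with i | j
    · show side _ i ↔ _
      refine side_mem (S := {x : Fin p | Sum.inl x ∈ S.1}) _ (fun i h0 => ?_) rfl i
      have : i = ⟨0, hp⟩ := Fin.ext h0
      rw [this]; exact S.2.1
    · exact ⟨fun h => h.elim, fun h => S.2.2 j h⟩
  right_inv A := by
    ext i; exact side_iff _ i

noncomputable def e3 (p : ℕ) (hq : 0 < q) :
    ↥{S : Set (Fin p ⊕ Fin q) | Sum.inr ⟨0, hq⟩ ∈ S ∧ ∀ i : Fin p, Sum.inl i ∉ S} ≃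
      Set {j : Fin q // (j : ℕ) ≠ 0} where
  toFun S := {j | Sum.inr j.1 ∈ S.1}
  invFun B := ⟨mk3 p q B, Or.inl rfl, fun i hi => hi⟩
  left_inv S := by
    apply Subtype.ext
    ext x
    rcases x with i | j
    · exact ⟨fun h => h.elim, fun h => S.2.2 i h⟩
    · show side _ j ↔ _
      refine side_mem (S := {x : Fin q | Sum.inr x ∈ S.1}) _ (fun j h0 => ?_) rfl j
      have : j = ⟨0, hq⟩ := Fin.ext h0
      rw [this]; exact S.2.1
  right_inv B := by
    ext j; exact side_iff _ j

def f4 (hp : 0 < p) (hq : 0 < q) :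
    ({i : Fin p // (i : ℕ) ≠ 0} ⊕ {j : Fin q // (j : ℕ) ≠ 0}) →
    ↥{S : Set (Fin p ⊕ Fin q) | Sum.inl ⟨0, hp⟩ ∉ S ∧ Sum.inr ⟨0, hq⟩ ∉ S ∧ ∃ x, S = {x}} :=
  fun x => match x with
  | Sum.inl i => ⟨{Sum.inl i.1},
      fun h => i.2 (by simpa [Fin.ext_iff, eq_comm] using h),
      fun h => by simp at h, ⟨_, rfl⟩⟩
  | Sum.inr j => ⟨{Sum.inr j.1},
      fun h => by simp at h,
      fun h => j.2 (by simpa [Fin.ext_iff, eq_comm] using h), ⟨_, rfl⟩⟩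

lemma f4_bij (hp : 0 < p) (hq : 0 < q) : Function.Bijective (f4 hp hq) := by
  constructor
  · rintro (i | i) (j | j) h <;>
      simp only [f4, Subtype.mk.injEq, Set.singleton_eq_singleton_iff] at h
    · exact congrArg Sum.inl (Subtype.ext (by exact Sum.inl.inj h))
    · exact absurd h (by simp)
    · exact absurd h (by simp)
    · exact congrArg Sum.inr (Subtype.ext (by exact Sum.inr.inj h))
  · rintro ⟨S, hS⟩
    obtain ⟨ha, hb, x, rfl⟩ := hS
    rcases x with i | j
    · have hi : (i : ℕ) ≠ 0 := fun h0 => ha (by simp [show i = ⟨0, hp⟩ from Fin.ext h0])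
      exact ⟨Sum.inl ⟨i, hi⟩, Subtype.ext rfl⟩
    · have hj : (j : ℕ) ≠ 0 := fun h0 => hb (by simp [show j = ⟨0, hq⟩ from Fin.ext h0])
      exact ⟨Sum.inr ⟨j, hj⟩, Subtype.ext rfl⟩

lemma card_ne {m : ℕ} (hm : 0 < m) : Fintype.card {i : Fin m // (i : ℕ) ≠ 0} = m - 1 := by
  classical
  have h1 : Fintype.card {i : Fin m // (i : ℕ) = 0} = 1 := by
    rw [Fintype.card_congr (Equiv.subtypeEquivRight (q := fun i => i = (⟨0, hm⟩ : Fin m))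
      (fun i => by simp [Fin.ext_iff]))]
    exact Fintype.card_subtype_eq _
  have h2 := Fintype.card_subtype_compl (fun i : Fin m => (i : ℕ) = 0)
  rw [h1, Fintype.card_fin] at h2
  convert h2 using 2

lemma count (hp : 0 < p) (hq : 0 < q) :
    numSubtrees (doubleStar p q) =
      2 ^ (p - 1) * 2 ^ (q - 1) + 2 ^ (p - 1) + 2 ^ (q - 1) + ((p - 1) + (q - 1)) := by
  classical
  rw [numSubtrees, subtree_eq hp hq]
  have d12 : Disjoint {S : Set (Fin p ⊕ Fin q) | Sum.inl ⟨0, hp⟩ ∈ S ∧ Sum.inr ⟨0, hq⟩ ∈ S}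
      {S : Set (Fin p ⊕ Fin q) | Sum.inl ⟨0, hp⟩ ∈ S ∧ ∀ j : Fin q, Sum.inr j ∉ S} :=
    Set.disjoint_left.mpr fun S h1 h2 => h2.2 ⟨0, hq⟩ h1.2
  have d13 : Disjoint {S : Set (Fin p ⊕ Fin q) | Sum.inl ⟨0, hp⟩ ∈ S ∧ Sum.inr ⟨0, hq⟩ ∈ S}
      {S : Set (Fin p ⊕ Fin q) | Sum.inr ⟨0, hq⟩ ∈ S ∧ ∀ i : Fin p, Sum.inl i ∉ S} :=
    Set.disjoint_left.mpr fun S h1 h3 => h3.2 ⟨0, hp⟩ h1.1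
  have d23 : Disjoint {S : Set (Fin p ⊕ Fin q) | Sum.inl ⟨0, hp⟩ ∈ S ∧ ∀ j : Fin q, Sum.inr j ∉ S}
      {S : Set (Fin p ⊕ Fin q) | Sum.inr ⟨0, hq⟩ ∈ S ∧ ∀ i : Fin p, Sum.inl i ∉ S} :=
    Set.disjoint_left.mpr fun S h2 h3 => h3.2 ⟨0, hp⟩ h2.1
  have d14 : Disjoint {S : Set (Fin p ⊕ Fin q) | Sum.inl ⟨0, hp⟩ ∈ S ∧ Sum.inr ⟨0, hq⟩ ∈ S}
      {S : Set (Fin p ⊕ Fin q) | Sum.inl ⟨0, hp⟩ ∉ S ∧ Sum.inr ⟨0, hq⟩ ∉ S ∧ ∃ x, S = {x}} :=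
    Set.disjoint_left.mpr fun S h1 h4 => h4.1 h1.1
  have d24 : Disjoint {S : Set (Fin p ⊕ Fin q) | Sum.inl ⟨0, hp⟩ ∈ S ∧ ∀ j : Fin q, Sum.inr j ∉ S}
      {S : Set (Fin p ⊕ Fin q) | Sum.inl ⟨0, hp⟩ ∉ S ∧ Sum.inr ⟨0, hq⟩ ∉ S ∧ ∃ x, S = {x}} :=
    Set.disjoint_left.mpr fun S h2 h4 => h4.1 h2.1
  have d34 : Disjoint {S : Set (Fin p ⊕ Fin q) | Sum.inr ⟨0, hq⟩ ∈ S ∧ ∀ i : Fin p, Sum.inl i ∉ S}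
      {S : Set (Fin p ⊕ Fin q) | Sum.inl ⟨0, hp⟩ ∉ S ∧ Sum.inr ⟨0, hq⟩ ∉ S ∧ ∃ x, S = {x}} :=
    Set.disjoint_left.mpr fun S h3 h4 => h4.2.1 h3.1
  have dB := Set.disjoint_union_left.mpr ⟨Set.disjoint_union_left.mpr ⟨d14, d24⟩, d34⟩
  have dA := Set.disjoint_union_left.mpr ⟨d13, d23⟩
  rw [Set.ncard_union_eq dB (Set.toFinite _) (Set.toFinite _),
    Set.ncard_union_eq dA (Set.toFinite _) (Set.toFinite _),
    Set.ncard_union_eq d12 (Set.toFinite _) (Set.toFinite _)]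
  have c1 : {S : Set (Fin p ⊕ Fin q) | Sum.inl ⟨0, hp⟩ ∈ S ∧ Sum.inr ⟨0, hq⟩ ∈ S}.ncard =
      2 ^ (p - 1) * 2 ^ (q - 1) := by
    rw [← Nat.card_coe_set_eq, Nat.card_congr (e1 hp hq), Nat.card_prod,
      Nat.card_eq_fintype_card, Nat.card_eq_fintype_card, Fintype.card_set, Fintype.card_set,
      card_ne hp, card_ne hq]
  have c2 : {S : Set (Fin p ⊕ Fin q) | Sum.inl ⟨0, hp⟩ ∈ S ∧ ∀ j : Fin q, Sum.inr j ∉ S}.ncard =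
      2 ^ (p - 1) := by
    rw [← Nat.card_coe_set_eq, Nat.card_congr (e2 hp q), Nat.card_eq_fintype_card,
      Fintype.card_set, card_ne hp]
  have c3 : {S : Set (Fin p ⊕ Fin q) | Sum.inr ⟨0, hq⟩ ∈ S ∧ ∀ i : Fin p, Sum.inl i ∉ S}.ncard =
      2 ^ (q - 1) := by
    rw [← Nat.card_coe_set_eq, Nat.card_congr (e3 p hq), Nat.card_eq_fintype_card,
      Fintype.card_set, card_ne hq]
  have c4 : {S : Set (Fin p ⊕ Fin q) |
      Sum.inl ⟨0, hp⟩ ∉ S ∧ Sum.inr ⟨0, hq⟩ ∉ S ∧ ∃ x, S = {x}}.ncard = (p - 1) + (q - 1) := by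
    rw [← Nat.card_coe_set_eq, Nat.card_congr (Equiv.ofBijective _ (f4_bij hp hq)).symm,
      Nat.card_sum, Nat.card_eq_fintype_card, Nat.card_eq_fintype_card, card_ne hp, card_ne hq]
  rw [c1, c2, c3, c4]

end DSproof

/-- For `q ≥ p > 1` with `p + q = n`: `F(D(p,q)) < F(D(p-1,q+1))`, and consequently
`F(D(p,q)) < F(K_{1,n-1}) = F(D(1,n-1))`. -/
theorem doubleStar_numSubtrees_lt (p q n : ℕ) (hp : 1 < p) (hpq : p ≤ q) (hn : p + q = n) :
    numSubtrees (doubleStar p q) < numSubtrees (doubleStar (p - 1) (q + 1)) ∧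
    numSubtrees (doubleStar p q) < numSubtrees (doubleStar 1 (n - 1)) := by
  have h1 := DSproof.count (p := p) (q := q) (by omega) (by omega)
  have h2 := DSproof.count (p := p - 1) (q := q + 1) (by omega) (by omega)
  have h3 := DSproof.count (p := 1) (q := n - 1) (by omega) (by omega)
  rw [h1, h2, h3]
  have hA : 2 ^ (p - 1) = 2 * 2 ^ (p - 2) := by
    rw [show p - 1 = (p - 2) + 1 by omega, pow_succ]; ring
  have hB : 2 ^ q = 2 * 2 ^ (q - 1) := by
    conv_lhs => rw [show q = (q - 1) + 1 by omega]
    rw [pow_succ]; ring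
  constructor
  · rw [show p - 1 - 1 = p - 2 by omega, show q + 1 - 1 = q from rfl]
    have hAB : (2 : ℕ) ^ (p - 2) < 2 ^ (q - 1) :=
      Nat.pow_lt_pow_right one_lt_two (by omega)
    have hprod : 2 ^ (p - 1) * 2 ^ (q - 1) = 2 ^ (p - 2) * 2 ^ q := by
      rw [← pow_add, ← pow_add]; congr 1; omega
    have hlin : p - 1 + (q - 1) = p - 2 + q := by omega
    rw [hprod, hlin, hA, hB]
    have := hAB
    nlinarith [hAB]
  · rw [show (1 : ℕ) - 1 = 0 from rfl, pow_zero, one_mul, show n - 1 - 1 = n - 2 by omega]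
    have hprod : 2 ^ (p - 1) * 2 ^ (q - 1) = 2 ^ (n - 2) := by
      rw [← pow_add]; congr 1; omega
    have hlin : p - 1 + (q - 1) = 0 + (n - 2) := by omega
    have h4 : (2 : ℕ) ^ (p - 1) ≤ 2 ^ (q - 1) :=
      Nat.pow_le_pow_right (by omega) (by omega)
    have h5 : (2 : ℕ) ^ q ≤ 2 ^ (n - 2) :=
      Nat.pow_le_pow_right (by omega) (by omega)
    rw [hprod, hlin]
    omega
end
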